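/- arXiv:2205.03697 — 12 statements merged into one kernel-verified Lean document; each statement's English description precedes it below -/
import Mathlib

section
/- For all positive integers n, the total number of even parts counted over all partitions of n into distinct parts equals the number of partitions of n in which exactly one part is repeated and that repeated part is odd, minus the number of partitions of n in which exactly one part is repeated and that repeated part is even. -/
/-- `a n`: the total number of even parts in all partitions of `n` into distinct parts. -/
def totalEvenDistinct (n : ℕ) : ℕ :=
  ∑ lam ∈ Nat.Partition.distincts n, (lam.parts.filter (fun x => Even x)).card

/-- `c_o n`: partitions of `n` with exactly one repeated part, that part odd. -/
noncomputable def cOdd (n : ℕ) : ℕ :=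
  Nat.card {lam : n.Partition //
    ∃ j, Odd j ∧ 2 ≤ lam.parts.count j ∧ ∀ i, i ≠ j → lam.parts.count i ≤ 1}

/-- `c_e n`: partitions of `n` with exactly one repeated part, that part even. -/
noncomputable def cEven (n : ℕ) : ℕ :=
  Nat.card {lam : n.Partition //
    ∃ j, Even j ∧ 2 ≤ lam.parts.count j ∧ ∀ i, i ≠ j → lam.parts.count i ≤ 1}

/-!
Write `D m` for the number of partitions of `m` into distinct parts. Adding or removing a part
`j` shows that the number `F m` of distinct partitions of `m` containing `j` satisfies
`F m + F (m - j) = D (m - j)`, hence `F m = ∑_{s ≥ 1} (-1)^(s+1) D (m - s j)`; summing over the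
even parts `j = 2k` gives `a n = ∑_{k, s ≥ 1} (-1)^(s+1) D (n - 2ks)`. Removing `2 ⌊c/2⌋` copies
of a part `j` repeated `c ≥ 2` times shows that the partitions of `n` whose only repeated part is
`j` number `∑_{s ≥ 1} D (n - 2sj)`, so exchanging `k` and `s` turns the double sum into
`∑_j (-1)^(j+1)` times these counts, which is `c_o n - c_e n`.
-/

open Finset

theorem Multiset.nodup_iff_nodup_erase_and_notMem_erase {α : Type*} [DecidableEq α]
    {s : Multiset α} {a : α} (ha : a ∈ s) : s.Nodup ↔ (s.erase a).Nodup ∧ a ∉ s.erase a := by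
  conv_lhs => rw [← Multiset.cons_erase ha]
  rw [Multiset.nodup_cons, and_comm]

theorem Multiset.replicate_le_and_nodup_sub_iff {α : Type*} [DecidableEq α] {s : Multiset α}
    {a : α} {t : ℕ} (ht : 1 ≤ t) :
    replicate (2 * t) a ≤ s ∧ (s - replicate (2 * t) a).Nodup ↔
      (2 ≤ s.count a ∧ ∀ i, i ≠ a → s.count i ≤ 1) ∧ s.count a / 2 = t := by
  rw [← le_count_iff_replicate_le, nodup_iff_count_le_one]
  simp only [count_sub, count_replicate]
  constructor
  · rintro ⟨h2, hle⟩
    have ha := hle a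
    simp only [if_true] at ha
    exact ⟨⟨by omega, fun i hi => by simpa [Ne.symm hi] using hle i⟩, by omega⟩
  · rintro ⟨⟨h2, hle⟩, rfl⟩
    refine ⟨by omega, fun i => ?_⟩
    by_cases hai : a = i
    · subst hai
      simp only [if_true]
      omega
    · simpa [hai] using hle i (Ne.symm hai)

theorem Finset.sum_Icc_one_succ {M : Type*} [AddCommMonoid M] (q : ℕ) (g : ℕ → M) :
    ∑ s ∈ Icc 1 (q + 1), g s = g 1 + ∑ s ∈ Icc 1 q, g (s + 1) := by
  rw [← Ico_add_one_right_eq_Icc, sum_eq_sum_Ico_succ_bot (by omega),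
    ← Ico_add_one_right_eq_Icc, sum_Ico_add']

theorem Finset.mem_Icc_one_div_two_mul_swap {n k s : ℕ} :
    k ∈ Icc 1 n ∧ s ∈ Icc 1 (n / (2 * k)) ↔ k ∈ Icc 1 (n / (2 * s)) ∧ s ∈ Icc 1 n := by
  simp only [mem_Icc]
  constructor
  · rintro ⟨⟨hk, -⟩, hs, hks⟩
    rw [Nat.le_div_iff_mul_le (by omega)] at hks ⊢
    exact ⟨⟨hk, by nlinarith⟩, hs, by nlinarith⟩
  · rintro ⟨⟨hk, hks⟩, hs, -⟩
    rw [Nat.le_div_iff_mul_le (by omega)] at hks ⊢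
    exact ⟨⟨hk, by nlinarith⟩, hs, by nlinarith⟩

theorem sum_neg_one_pow_succ_mul (s : Finset ℕ) (f : ℕ → ℤ) :
    ∑ j ∈ s, (-1) ^ (j + 1) * f j = ∑ j ∈ s with Odd j, f j - ∑ j ∈ s with Even j, f j := by
  rw [← sum_filter_add_sum_filter_not s Odd, sub_eq_add_neg, ← sum_neg_distrib]
  simp only [Nat.not_odd_iff_even]
  congr 1 <;> refine sum_congr rfl fun j hj => ?_ <;> have hj := (mem_filter.mp hj).2
  · rw [hj.add_one.neg_one_pow, one_mul]
  · rw [hj.add_one.neg_one_pow, neg_one_mul]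

namespace Nat.Partition

theorem sum_le_of_le_parts {n : ℕ} (lam : n.Partition) {r : Multiset ℕ} (hr : r ≤ lam.parts) :
    r.sum ≤ n := by
  have h := congrArg Multiset.sum (Multiset.sub_add_cancel hr)
  rw [Multiset.sum_add, lam.parts_sum] at h
  omega

theorem card_filter_le_parts {n k : ℕ} (r : Multiset ℕ) (hr : ∀ i ∈ r, 0 < i)
    (hrk : r.sum + k = n) (p : Multiset ℕ → Prop) [DecidablePred p] :
    #{lam : n.Partition | r ≤ lam.parts ∧ p (lam.parts - r)} =
      #{mu : k.Partition | p mu.parts} := by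
  refine card_bij'
    (fun lam h => ⟨lam.parts - r,
      fun hi => lam.parts_pos (Multiset.mem_of_le (Multiset.sub_le_self _ _) hi), ?_⟩)
    (fun mu _ => ⟨mu.parts + r, ?_, ?_⟩) ?_ ?_ ?_ ?_
  · have h := congrArg Multiset.sum (Multiset.sub_add_cancel (mem_filter.mp h).2.1)
    rw [Multiset.sum_add, lam.parts_sum] at h
    omega
  · intro i hi
    rcases Multiset.mem_add.mp hi with hi | hi
    exacts [mu.parts_pos hi, hr i hi]
  · rw [Multiset.sum_add, mu.parts_sum]
    omega
  · intro lam h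
    simpa using (mem_filter.mp h).2.2
  · intro mu h
    simpa using (mem_filter.mp h).2
  · intro lam h
    ext1
    exact Multiset.sub_add_cancel (mem_filter.mp h).2.1
  · intro mu _
    ext1
    exact Multiset.add_sub_cancel_right

theorem card_distincts_mem_add_card_distincts_mem {j m : ℕ} (hj : 0 < j) (hjm : j ≤ m) :
    #{lam ∈ distincts m | j ∈ lam.parts} + #{lam ∈ distincts (m - j) | j ∈ lam.parts} =
      #(distincts (m - j)) := by
  have hremove : #{lam ∈ distincts m | j ∈ lam.parts} =
      #{mu ∈ distincts (m - j) | j ∉ mu.parts} := by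
    rw [distincts, distincts, filter_filter, filter_filter]
    convert card_filter_le_parts (n := m) (k := m - j) {j} (by simpa using hj)
      (by rw [Multiset.sum_singleton]; omega)
      (fun s => s.Nodup ∧ j ∉ s) using 2
    refine filter_congr fun lam _ => ?_
    rw [Multiset.singleton_le, Multiset.sub_singleton, and_comm]
    exact and_congr_right Multiset.nodup_iff_nodup_erase_and_notMem_erase
  rw [hremove, add_comm, card_filter_add_card_filter_not]

theorem card_distincts_mem_eq_sum {j : ℕ} (hj : 0 < j) (m : ℕ) :
    (#{lam ∈ distincts m | j ∈ lam.parts} : ℤ) =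
      ∑ s ∈ Icc 1 (m / j), (-1) ^ (s + 1) * (#(distincts (m - j * s)) : ℤ) := by
  induction m using Nat.strong_induction_on with
  | _ m ih =>
    rcases lt_or_ge m j with hmj | hjm
    · have hempty : {lam ∈ distincts m | j ∈ lam.parts} = ∅ :=
        filter_eq_empty_iff.mpr fun lam _ hj => (le_of_mem_parts hj).not_gt hmj
      simp [hempty, Nat.div_eq_of_lt hmj]
    · have htail : ∑ s ∈ Icc 1 ((m - j) / j),
            (-1) ^ (s + 1 + 1) * (#(distincts (m - j * (s + 1))) : ℤ) =
          -#{lam ∈ distincts (m - j) | j ∈ lam.parts} := by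
        rw [ih (m - j) (by omega), ← sum_neg_distrib]
        refine sum_congr rfl fun s _ => ?_
        rw [Nat.sub_sub, mul_add_one, add_comm (j * s), pow_succ]
        ring
      have hrec := card_distincts_mem_add_card_distincts_mem hj hjm
      rw [Nat.div_eq_sub_div hj hjm, sum_Icc_one_succ, htail, mul_one]
      norm_num
      omega

theorem card_filter_even_parts {n : ℕ} (lam : n.Partition) (hlam : lam.parts.Nodup) :
    (lam.parts.filter Even).card = #{k ∈ Icc 1 n | 2 * k ∈ lam.parts} := by
  have heven : (lam.parts.filter Even).toFinset =
      {k ∈ Icc 1 n | 2 * k ∈ lam.parts}.image (2 * ·) := by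
    ext x
    simp only [Multiset.toFinset_filter, mem_filter, Multiset.mem_toFinset, mem_image, mem_Icc]
    constructor
    · rintro ⟨hx, k, rfl⟩
      have := lam.parts_pos hx
      have := le_of_mem_parts hx
      exact ⟨k, ⟨⟨by omega, by omega⟩, by rwa [two_mul]⟩, by ring⟩
    · rintro ⟨k, ⟨-, hk⟩, rfl⟩
      exact ⟨hk, k, two_mul k⟩
  rw [← Multiset.toFinset_card_of_nodup (hlam.filter _), heven,
    Finset.card_image_of_injective _ (mul_right_injective₀ two_ne_zero)]

end Nat.Partition

open Nat.Partition

theorem totalEvenDistinct_eq_sum_card_distincts_mem (n : ℕ) :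
    totalEvenDistinct n = ∑ k ∈ Icc 1 n, #{lam ∈ distincts n | 2 * k ∈ lam.parts} := by
  calc totalEvenDistinct n
      = ∑ lam ∈ distincts n, #{k ∈ Icc 1 n | 2 * k ∈ lam.parts} :=
        sum_congr rfl fun lam hlam =>
          card_filter_even_parts lam (by simpa [distincts] using hlam)
    _ = _ := by simp only [card_filter]; exact sum_comm

open Classical in
noncomputable def onlyRepeatedPart (j n : ℕ) : Finset n.Partition :=
  {lam | 2 ≤ lam.parts.count j ∧ ∀ i, i ≠ j → lam.parts.count i ≤ 1}

theorem card_onlyRepeatedPart {j : ℕ} (hj : 0 < j) (n : ℕ) :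
    #(onlyRepeatedPart j n) = ∑ s ∈ Icc 1 (n / (2 * j)), #(distincts (n - 2 * s * j)) := by
  classical
  have hmaps : Set.MapsTo (fun lam : n.Partition => lam.parts.count j / 2)
      (onlyRepeatedPart j n) (Icc 1 (n / (2 * j))) := by
    intro lam hlam
    have hcount := (mem_filter.mp hlam).2.1
    have hsum : lam.parts.count j * j ≤ n := by
      simpa using sum_le_of_le_parts lam (Multiset.le_count_iff_replicate_le.mp le_rfl)
    simp only [coe_Icc, Set.mem_Icc, Nat.le_div_iff_mul_le (by omega : 0 < 2 * j)]
    constructor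
    · omega
    · calc lam.parts.count j / 2 * (2 * j) = lam.parts.count j / 2 * 2 * j := by ring
        _ ≤ lam.parts.count j * j := Nat.mul_le_mul_right _ (Nat.div_mul_le_self _ 2)
        _ ≤ n := hsum
  rw [card_eq_sum_card_fiberwise hmaps]
  refine sum_congr rfl fun s hs => ?_
  rw [mem_Icc, Nat.le_div_iff_mul_le (by omega)] at hs
  have hsj : 2 * s * j ≤ n := by linarith [hs.2]
  rw [onlyRepeatedPart, filter_filter, distincts]
  convert card_filter_le_parts (n := n) (k := n - 2 * s * j) (Multiset.replicate (2 * s) j)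
    (fun i hi => Multiset.eq_of_mem_replicate hi ▸ hj)
    (by rw [Multiset.sum_replicate, smul_eq_mul]; omega) Multiset.Nodup using 2
  exact filter_congr fun lam _ => (Multiset.replicate_le_and_nodup_sub_iff hs.1).symm

theorem natCard_exists_onlyRepeatedPart (P : ℕ → Prop) [DecidablePred P] (n : ℕ) :
    Nat.card {lam : n.Partition //
        ∃ j, P j ∧ 2 ≤ lam.parts.count j ∧ ∀ i, i ≠ j → lam.parts.count i ≤ 1} =
      ∑ j ∈ Icc 1 n with P j, #(onlyRepeatedPart j n) := by
  classical
  rw [Nat.card_eq_fintype_card, Fintype.card_subtype, ← card_biUnion]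
  · congr 1
    ext lam
    simp only [onlyRepeatedPart, mem_filter, mem_biUnion, mem_univ, true_and, mem_Icc]
    constructor
    · rintro ⟨j, hP, h2, hle⟩
      have hj : j ∈ lam.parts := Multiset.count_pos.mp (by omega)
      exact ⟨j, ⟨⟨lam.parts_pos hj, le_of_mem_parts hj⟩, hP⟩, h2, hle⟩
    · rintro ⟨j, ⟨-, hP⟩, h⟩
      exact ⟨j, hP, h⟩
  · intro j _ j' _ hne
    refine disjoint_left.mpr fun lam h h' => ?_
    have := (mem_filter.mp h).2.1
    have := (mem_filter.mp h').2.2 j hne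
    omega

theorem total_even_eq_cOdd_sub_cEven_general (n : ℕ) :
    (totalEvenDistinct n : ℤ) = (cOdd n : ℤ) - (cEven n : ℤ) := by
  calc (totalEvenDistinct n : ℤ)
      = ∑ k ∈ Icc 1 n, ∑ s ∈ Icc 1 (n / (2 * k)),
          (-1) ^ (s + 1) * (#(distincts (n - 2 * k * s)) : ℤ) := by
        rw [totalEvenDistinct_eq_sum_card_distincts_mem]
        push_cast
        exact sum_congr rfl fun k hk => card_distincts_mem_eq_sum (by simp at hk; omega) n
    _ = ∑ s ∈ Icc 1 n, (-1) ^ (s + 1) * (#(onlyRepeatedPart s n) : ℤ) := by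
        rw [sum_comm' fun _ _ => mem_Icc_one_div_two_mul_swap]
        refine sum_congr rfl fun s hs => ?_
        rw [card_onlyRepeatedPart (by simp at hs; omega), Nat.cast_sum, mul_sum]
    _ = cOdd n - cEven n := by
        rw [sum_neg_one_pow_succ_mul, cOdd, cEven, natCard_exists_onlyRepeatedPart,
          natCard_exists_onlyRepeatedPart]
        push_cast
        rfl

theorem total_even_eq_cOdd_sub_cEven (n : ℕ) (hn : 1 ≤ n) :
    (totalEvenDistinct n : ℤ) = (cOdd n : ℤ) - (cEven n : ℤ) :=
  total_even_eq_cOdd_sub_cEven_general n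
end

section
/- For all positive integers n, a(n) = (-1)^n (b_o(n) - b_e(n)), where a(n) is the total number of even parts in all partitions of n into distinct parts, and b_o(n) (resp. b_e(n)) is the number of partitions of n into an odd (resp. even) number of parts in which the set of distinct even parts has exactly one element. -/
/-- `b_o n`: partitions of `n` into an odd number of parts whose set of even parts is a singleton. -/
noncomputable def bOdd (n : ℕ) : ℕ :=
  Nat.card {lam : n.Partition //
    Odd (Multiset.card lam.parts) ∧
      ∃ j, Even j ∧ j ∈ lam.parts ∧ ∀ i ∈ lam.parts, Even i → i = j}

/-- `b_e n`: partitions of `n` into an even number of parts whose set of even parts is a singleton. -/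
noncomputable def bEven (n : ℕ) : ℕ :=
  Nat.card {lam : n.Partition //
    Even (Multiset.card lam.parts) ∧
      ∃ j, Even j ∧ j ∈ lam.parts ∧ ∀ i ∈ lam.parts, Even i → i = j}

/-!
Both sides equal `∑_{j even} ∑_{m ≥ 1, jm ≤ n} (-1)^(m+1) D(n - jm)`, where `D(k)` is the number
of partitions of `k` into distinct parts.

On the left, `a(n)` is the sum over even `j` of the number of distinct partitions of `n` having
`j` as a part. Deleting that part leaves a distinct partition of `n - j` avoiding `j`, and those
are `D(n - j)` minus the ones containing `j`, so the count telescopes into the alternating sum.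

On the right, a partition whose only even part is `j`, repeated `m` times, is `m` copies of `j`
together with a partition of `n - jm` into odd parts, and `n` and the number of parts differ in
parity by exactly `m`. Euler's theorem then replaces odd partitions by distinct ones.
-/

open Finset

theorem Multiset.neg_one_pow_sum_add_card {R : Type*} [Monoid R] [HasDistribNeg R]
    (s : Multiset ℕ) : (-1 : R) ^ (s.sum + card s) = (-1) ^ card (s.filter Even) := by
  induction s using Multiset.induction_on with
  | empty => simp
  | cons a s ih =>
    rw [sum_cons, card_cons, filter_cons, card_add,
      show a + s.sum + (card s + 1) = a + 1 + (s.sum + card s) by ring, pow_add, ih]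
    rcases Nat.even_or_odd a with ha | ha
    · simp [ha, ha.add_one.neg_one_pow, pow_add]
    · simp [ha.add_one.neg_one_pow, Nat.not_even_iff_odd.2 ha]

theorem Finset.sum_neg_one_pow_eq_card_even_sub_card_odd {ι : Type*} (s : Finset ι)
    (f : ι → ℕ) :
    ∑ i ∈ s, (-1 : ℤ) ^ f i = #{i ∈ s | Even (f i)} - #{i ∈ s | Odd (f i)} := by
  simp_rw [neg_one_pow_eq_ite, sum_ite, sum_const, ← Nat.not_even_iff_odd]
  simp [sub_eq_add_neg]

theorem Multiset.exists_even_forall_eq_iff_filter_even_eq_replicate {s : Multiset ℕ} :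
    (∃ j, Even j ∧ j ∈ s ∧ ∀ i ∈ s, Even i → i = j) ↔
      ∃ j m, Even j ∧ s.filter Even = replicate (m + 1) j := by
  constructor
  · rintro ⟨j, hj, hjs, hall⟩
    have hmem : j ∈ s.filter Even := mem_filter.2 ⟨hjs, hj⟩
    obtain ⟨m, hm⟩ :=
      Nat.exists_eq_add_one_of_ne_zero (card_pos_iff_exists_mem.2 ⟨j, hmem⟩).ne'
    refine ⟨j, m, hj, hm ▸ eq_replicate_card.2 fun i hi => ?_⟩
    exact hall i (mem_of_mem_filter hi) (mem_filter.1 hi).2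
  · rintro ⟨j, m, hj, hs⟩
    have hmem : j ∈ s.filter Even := hs ▸ mem_replicate.2 ⟨m.succ_ne_zero, rfl⟩
    refine ⟨j, hj, mem_of_mem_filter hmem, fun i hi he => ?_⟩
    exact eq_of_mem_replicate (hs ▸ mem_filter.2 ⟨hi, he⟩)

namespace Nat.Partition

theorem card_filter_mem_distincts_eq_card_filter_not_mem {n a : ℕ} (ha : 0 < a) (han : a ≤ n) :
    #{p ∈ distincts n | a ∈ p.parts} = #{p ∈ distincts (n - a) | a ∉ p.parts} := by
  let e := partitionWithPartEquiv ha han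
  refine card_bij' (fun p hp => e ⟨p, (mem_filter.1 hp).2⟩) (fun q _ => (e.symm q).1)
    ?_ ?_ (fun p _ => by simp) (fun q _ => by simp)
  · intro p hp
    simp only [distincts, mem_filter, mem_univ, true_and] at hp ⊢
    rw [partitionWithPartEquiv_apply_parts]
    exact ⟨hp.1.erase a, hp.1.notMem_erase⟩
  · intro q hq
    simp only [distincts, mem_filter, mem_univ, true_and] at hq ⊢
    rw [partitionWithPartEquiv_symm_apply_parts]
    exact ⟨Multiset.nodup_cons.2 ⟨hq.2, hq.1⟩, Multiset.mem_cons_self _ _⟩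

theorem card_filter_mem_distincts_eq_sum {a : ℕ} (ha : 0 < a) (n : ℕ) :
    (#{p ∈ distincts n | a ∈ p.parts} : ℤ) =
      ∑ i ∈ range (n / a), (-1) ^ i * (#(distincts (n - a * (i + 1))) : ℤ) := by
  induction n using Nat.strong_induction_on with
  | _ n ih =>
  rcases lt_or_ge n a with hna | han
  · rw [Nat.div_eq_of_lt hna, range_zero, sum_empty, Nat.cast_eq_zero, Finset.card_eq_zero,
      filter_eq_empty_iff]
    exact fun p _ hp => (le_of_mem_parts hp).not_gt hna
  have hsplit : (#{p ∈ distincts (n - a) | a ∉ p.parts} : ℤ) =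
      #(distincts (n - a)) - #{p ∈ distincts (n - a) | a ∈ p.parts} := by
    rw [← card_filter_add_card_filter_not (s := distincts (n - a)) (a ∈ ·.parts)]
    push_cast
    ring
  have hshift : ∀ i ∈ range ((n - a) / a),
      (-1) ^ (i + 1) * (#(distincts (n - a * (i + 1 + 1))) : ℤ) =
        -((-1) ^ i * #(distincts (n - a - a * (i + 1)))) := fun i _ => by
    rw [Nat.sub_sub, add_comm a, ← mul_add_one a (i + 1), pow_succ]
    ring
  rw [card_filter_mem_distincts_eq_card_filter_not_mem ha han, Nat.div_eq_sub_div ha han,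
    sum_range_succ', sum_congr rfl hshift, sum_neg_distrib, hsplit, ih (n - a) (by omega),
    zero_add, mul_one]
  ring

variable {n : ℕ}

theorem card_filter_even_parts_of_mem_distincts {p : n.Partition} (hp : p ∈ distincts n) :
    Multiset.card (p.parts.filter Even) = #{j ∈ {j ∈ Icc 1 n | Even j} | j ∈ p.parts} := by
  rw [← Multiset.toFinset_card_of_nodup ((mem_filter.1 hp).2.filter _), Multiset.toFinset_filter]
  congr 1
  ext j
  simp only [mem_filter, Multiset.mem_toFinset, mem_Icc]
  constructor
  · rintro ⟨hj, he⟩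
    exact ⟨⟨⟨p.parts_pos hj, le_of_mem_parts hj⟩, he⟩, hj⟩
  · rintro ⟨⟨-, he⟩, hj⟩
    exact ⟨hj, he⟩

theorem sum_filter_even_add_sum_filter_not_even (p : n.Partition) :
    (p.parts.filter Even).sum + (p.parts.filter (¬Even ·)).sum = n := by
  rw [← Multiset.sum_add, Multiset.filter_add_not, p.parts_sum]

theorem neg_one_pow_mul_neg_one_pow_card_parts (p : n.Partition) :
    (-1 : ℤ) ^ n * (-1) ^ Multiset.card p.parts = (-1) ^ Multiset.card (p.parts.filter Even) := by
  rw [← pow_add, ← Multiset.neg_one_pow_sum_add_card, p.parts_sum]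

theorem card_filter_even_parts_eq {s : Multiset ℕ} (hs : ∀ x ∈ s, 0 < x ∧ Even x)
    (hsn : s.sum ≤ n) : #{p : n.Partition | p.parts.filter Even = s} = #(odds (n - s.sum)) := by
  have hpos {q : Multiset ℕ} (hq : ∀ x ∈ q, 0 < x) : ∀ {x}, x ∈ s + q → 0 < x :=
    fun hx => (Multiset.mem_add.1 hx).elim (fun h => (hs _ h).1) (hq _)
  refine card_bij'
    (fun p hp => ⟨p.parts.filter (¬Even ·),
      fun hx => p.parts_pos (Multiset.mem_of_mem_filter hx), ?_⟩)
    (fun q _ => ⟨s + q.parts, hpos fun _ => q.parts_pos,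
      by rw [Multiset.sum_add, q.parts_sum]; omega⟩)
    ?_ ?_ ?_ ?_
  · have := sum_filter_even_add_sum_filter_not_even p
    rw [(mem_filter.1 hp).2] at this
    omega
  · intro p hp
    simp only [odds, restricted, mem_filter, mem_univ, true_and]
    exact fun i hi => (Multiset.mem_filter.1 hi).2
  · intro q hq
    simp only [odds, restricted, mem_filter, mem_univ, true_and] at hq ⊢
    rw [Multiset.filter_add, Multiset.filter_eq_self.2 fun x hx => (hs x hx).2,
      Multiset.filter_eq_nil.2 hq, add_zero]
  · intro p hp
    ext1
    simp only [mem_filter, mem_univ, true_and] at hp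
    conv_rhs => rw [← Multiset.filter_add_not Even p.parts, hp]
  · intro q hq
    simp only [odds, restricted, mem_filter, mem_univ, true_and] at hq
    ext1
    dsimp only
    rw [Multiset.filter_add, Multiset.filter_eq_nil.2 fun x hx => not_not.2 (hs x hx).2,
      Multiset.filter_eq_self.2 hq, zero_add]

theorem sum_filter_even_parts_eq_replicate {i j : ℕ} (hj : 0 < j) (hje : Even j)
    (hi : i < n / j) :
    ∑ p : n.Partition with p.parts.filter Even = Multiset.replicate (i + 1) j,
      (-1 : ℤ) ^ n * (-1) ^ Multiset.card p.parts = -((-1) ^ i * #(odds (n - j * (i + 1)))) := by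
  have hsum : (Multiset.replicate (i + 1) j).sum ≤ n := by
    rwa [Multiset.sum_replicate, smul_eq_mul, ← Nat.le_div_iff_mul_le hj]
  have hs : ∀ x ∈ Multiset.replicate (i + 1) j, 0 < x ∧ Even x := fun x hx =>
    Multiset.eq_of_mem_replicate hx ▸ ⟨hj, hje⟩
  rw [sum_congr rfl fun p hp => by
      rw [neg_one_pow_mul_neg_one_pow_card_parts, (mem_filter.1 hp).2, Multiset.card_replicate],
    sum_const, card_filter_even_parts_eq hs hsum, Multiset.sum_replicate, smul_eq_mul,
    nsmul_eq_mul, mul_comm (i + 1), pow_succ]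
  ring

open Classical in
noncomputable def singleEvenParts (n : ℕ) : Finset n.Partition :=
  {p | ∃ j, Even j ∧ j ∈ p.parts ∧ ∀ i ∈ p.parts, Even i → i = j}

theorem singleEvenParts_eq_biUnion (n : ℕ) :
    singleEvenParts n = ({j ∈ Icc 1 n | Even j}.sigma fun j => range (n / j)).biUnion
      fun x => {p | p.parts.filter Even = Multiset.replicate (x.2 + 1) x.1} := by
  ext p
  simp only [singleEvenParts, Multiset.exists_even_forall_eq_iff_filter_even_eq_replicate,
    mem_filter, mem_univ, true_and, mem_biUnion, mem_sigma, mem_Icc, mem_range, Sigma.exists]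
  constructor
  · rintro ⟨j, m, hj, hp⟩
    have hjp : j ∈ p.parts :=
      Multiset.mem_of_mem_filter (hp ▸ Multiset.mem_replicate.2 ⟨m.succ_ne_zero, rfl⟩)
    have hsum := sum_filter_even_add_sum_filter_not_even p
    rw [hp, Multiset.sum_replicate, smul_eq_mul] at hsum
    refine ⟨j, m, ⟨⟨⟨p.parts_pos hjp, le_of_mem_parts hjp⟩, hj⟩, ?_⟩, hp⟩
    rw [← Nat.add_one_le_iff, Nat.le_div_iff_mul_le (p.parts_pos hjp)]
    omega
  · rintro ⟨j, m, ⟨⟨-, hj⟩, -⟩, hp⟩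
    exact ⟨j, m, hj, hp⟩

end Nat.Partition

open Nat.Partition

theorem totalEvenDistinct_eq_sum (n : ℕ) :
    totalEvenDistinct n = ∑ j ∈ Icc 1 n with Even j, #{p ∈ distincts n | j ∈ p.parts} := by
  rw [totalEvenDistinct, sum_congr rfl fun p hp => card_filter_even_parts_of_mem_distincts hp]
  exact sum_card_bipartiteAbove_eq_sum_card_bipartiteBelow _

open Classical in
theorem bOdd_eq_card (n : ℕ) :
    bOdd n = #{p ∈ singleEvenParts n | Odd (Multiset.card p.parts)} := by
  rw [bOdd, Nat.card_eq_fintype_card, Fintype.card_subtype, singleEvenParts, filter_filter]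
  simp only [and_comm]

open Classical in
theorem bEven_eq_card (n : ℕ) :
    bEven n = #{p ∈ singleEvenParts n | Even (Multiset.card p.parts)} := by
  rw [bEven, Nat.card_eq_fintype_card, Fintype.card_subtype, singleEvenParts, filter_filter]
  simp only [and_comm]

theorem neg_one_pow_mul_bOdd_sub_bEven (n : ℕ) :
    (-1) ^ n * ((bOdd n : ℤ) - bEven n) =
      ∑ j ∈ Icc 1 n with Even j, ∑ i ∈ range (n / j),
        (-1) ^ i * (#(odds (n - j * (i + 1))) : ℤ) := by
  have hsign : (bOdd n : ℤ) - bEven n =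
      -∑ p ∈ singleEvenParts n, (-1) ^ Multiset.card p.parts := by
    rw [sum_neg_one_pow_eq_card_even_sub_card_odd, bOdd_eq_card, bEven_eq_card, neg_sub]
  rw [hsign, mul_neg, mul_sum, singleEvenParts_eq_biUnion, sum_biUnion, sum_sigma,
    ← sum_neg_distrib]
  · refine sum_congr rfl fun j hj => ?_
    rw [← sum_neg_distrib]
    refine sum_congr rfl fun i hi => ?_
    simp only [mem_filter, mem_Icc] at hj
    rw [sum_filter_even_parts_eq_replicate hj.1.1 hj.2 (mem_range.1 hi), neg_neg]
  · rintro ⟨j, i⟩ - ⟨j', i'⟩ - hne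
    rw [Function.onFun, disjoint_filter]
    intro p _ hp hp'
    have h := hp.symm.trans hp'
    obtain rfl : i = i' := by simpa using congrArg Multiset.card h
    obtain rfl : j = j' := Multiset.replicate_right_injective i.succ_ne_zero h
    exact hne rfl

theorem total_even_eq_sign_b_general (n : ℕ) :
    (totalEvenDistinct n : ℤ) = (-1) ^ n * ((bOdd n : ℤ) - (bEven n : ℤ)) := by
  rw [neg_one_pow_mul_bOdd_sub_bEven, totalEvenDistinct_eq_sum, Nat.cast_sum]
  refine sum_congr rfl fun j hj => ?_
  rw [card_filter_mem_distincts_eq_sum (mem_Icc.1 (mem_filter.1 hj).1).1]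
  simp only [card_odds_eq_card_distincts]

theorem total_even_eq_sign_b (n : ℕ) (hn : 1 ≤ n) :
    (totalEvenDistinct n : ℤ) = (-1) ^ n * ((bOdd n : ℤ) - (bEven n : ℤ)) :=
  total_even_eq_sign_b_general n
end

section
/- Let p and r be non-negative integers with p ≥ r + 2. Then for all n ≥ 1, the total number of parts congruent to −r modulo p counted over all partitions of n into distinct parts equals g_{r,o}(n,p) − g_{r,e}(n,p), where g_{r,o}(n,p) (resp. g_{r,e}(n,p)) is the number of partitions of n in which exactly one part is repeated, this repeated part is odd (resp. even), and its multiplicity is at least p − r and congruent to −r or −r+1 modulo p. -/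
/-- `a_r(n,p)`: total number of parts congruent to `-r` modulo `p` in all partitions of `n`
into distinct parts. -/
def aModDistinct (p r n : ℕ) : ℕ :=
  ∑ lam ∈ Nat.Partition.distincts n, (lam.parts.filter (fun x => (x + r) % p = 0)).card

/-- `g_{r,o}(n,p)`: partitions of `n` in which exactly one part is repeated, this repeated part
is odd, and its multiplicity is at least `p - r` and congruent to `-r` or `-r + 1` modulo `p`. -/
noncomputable def gOdd (p r n : ℕ) : ℕ :=
  Nat.card {lam : n.Partition //
    ∃ j, Odd j ∧ 2 ≤ lam.parts.count j ∧
      p - r ≤ lam.parts.count j ∧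
      ((lam.parts.count j + r) % p = 0 ∨ (lam.parts.count j + r) % p = 1 % p) ∧
      ∀ i, i ≠ j → lam.parts.count i ≤ 1}

/-- `g_{r,e}(n,p)`: as `g_{r,o}(n,p)` but with the repeated part even. -/
noncomputable def gEven (p r n : ℕ) : ℕ :=
  Nat.card {lam : n.Partition //
    ∃ j, Even j ∧ 2 ≤ lam.parts.count j ∧
      p - r ≤ lam.parts.count j ∧
      ((lam.parts.count j + r) % p = 0 ∨ (lam.parts.count j + r) % p = 1 % p) ∧
      ∀ i, i ≠ j → lam.parts.count i ≤ 1}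


/-!
Let `R(j, m, n)` count the partitions of `n` in which `j` occurs exactly `m` times and no other
part repeats. Removing the `m` copies of `j` gives `R(j, m, n) + R(j, m + 1, n) = D(n - m j)`,
the number of partitions of `n - m j` into distinct parts (zero if `m j > n`). This is symmetric
in `j` and `m`, so `R(j, a, n) + R(j, a + 1, n) = R(a, j, n) + R(a, j + 1, n)`, and the signed sum
of the right-hand side over `j ≥ 1` with signs `(-1)^(j+1)` telescopes to `R(a, 1, n)`, the number
of distinct partitions of `n` containing `a`. Summed over `a ≡ -r (mod p)` this is `a_r(n, p)`.
For `p ≥ r + 2` the admissible multiplicities are exactly the `a` and `a + 1` with `a ≥ 1`,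
`a ≡ -r (mod p)`, so the same signed sum of the left-hand side counts `g_{r,o}(n,p) - g_{r,e}(n,p)`.
-/

open Finset

def Multiset.SingleRepeat (j m : ℕ) (s : Multiset ℕ) : Prop :=
  s.count j = m ∧ ∀ i, i ≠ j → s.count i ≤ 1

namespace Multiset

variable {j m k : ℕ} {s : Multiset ℕ}

lemma singleRepeat_add_replicate_iff :
    (s + replicate m j).SingleRepeat j (m + k) ↔ s.SingleRepeat j k := by
  simp only [SingleRepeat, count_add, count_replicate_self]
  refine and_congr (by omega) (forall_congr' fun i => imp_congr_right fun hi => ?_)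
  rw [count_replicate, if_neg (Ne.symm hi), add_zero]

lemma singleRepeat_zero_iff : s.SingleRepeat j 0 ↔ s.Nodup ∧ j ∉ s := by
  rw [SingleRepeat, nodup_iff_count_le_one, ← count_eq_zero]
  refine ⟨fun ⟨hj, hle⟩ => ⟨fun i => ?_, hj⟩, fun ⟨hle, hj⟩ => ⟨hj, fun i _ => hle i⟩⟩
  rcases eq_or_ne i j with rfl | hi
  · omega
  · exact hle i hi

lemma singleRepeat_one_iff : s.SingleRepeat j 1 ↔ s.Nodup ∧ j ∈ s := by
  rw [SingleRepeat, nodup_iff_count_le_one, ← one_le_count_iff_mem]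
  refine ⟨fun ⟨hj, hle⟩ => ⟨fun i => ?_, hj.ge⟩, fun ⟨hle, hj⟩ => ⟨?_, fun i _ => hle i⟩⟩
  · rcases eq_or_ne i j with rfl | hi
    · omega
    · exact hle i hi
  · exact le_antisymm (hle j) hj

end Multiset

namespace Nat.Partition

open Multiset

variable {n j m : ℕ}

lemma count_mul_le (l : n.Partition) (j : ℕ) : l.parts.count j * j ≤ n := by
  obtain ⟨t, ht⟩ := Multiset.le_iff_exists_add.mp
    (le_count_iff_replicate_le.mp (le_refl (l.parts.count j)))
  have := congrArg Multiset.sum ht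
  rw [l.parts_sum, sum_add, sum_replicate, smul_eq_mul] at this
  omega

def withCopiesEquiv (hj : 0 < j) (h : m * j ≤ n) :
    {l : n.Partition // m ≤ l.parts.count j} ≃ (n - m * j).Partition where
  toFun l := ⟨l.1.parts - replicate m j, fun hi => l.1.parts_pos (mem_of_le tsub_le_self hi), by
    have := congrArg Multiset.sum (tsub_add_cancel_of_le (le_count_iff_replicate_le.mp l.2))
    rw [sum_add, sum_replicate, smul_eq_mul, l.1.parts_sum] at this
    omega⟩
  invFun l := ⟨⟨l.parts + replicate m j, fun hi => by
      rcases mem_add.mp hi with hi | hi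
      · exact l.parts_pos hi
      · rwa [eq_of_mem_replicate hi], by
    rw [sum_add, sum_replicate, smul_eq_mul, l.parts_sum]
    omega⟩, by simp⟩
  left_inv l := Subtype.ext <| Nat.Partition.ext <|
    tsub_add_cancel_of_le (le_count_iff_replicate_le.mp l.2)
  right_inv l := Nat.Partition.ext <| add_tsub_cancel_right _ _

end Nat.Partition

noncomputable def singleRepeatCount (j m n : ℕ) : ℕ :=
  Nat.card {l : n.Partition // l.parts.SingleRepeat j m}

section singleRepeatCount

open Multiset

variable {j m k n a : ℕ}

lemma singleRepeatCount_add (hj : 0 < j) (h : m * j ≤ n) :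
    singleRepeatCount j (m + k) n = singleRepeatCount j k (n - m * j) :=
  Nat.card_congr <| ((Equiv.subtypeEquiv (Nat.Partition.withCopiesEquiv hj h).symm
    fun _ => singleRepeat_add_replicate_iff.symm).trans
    (Equiv.subtypeSubtypeEquivSubtype fun hl => by have := hl.1; omega)).symm

lemma singleRepeatCount_eq_zero (h : n < m * j) : singleRepeatCount j m n = 0 := by
  rw [singleRepeatCount, Nat.card_eq_zero]
  refine Or.inl ⟨fun ⟨l, hl⟩ => ?_⟩
  have := l.count_mul_le j
  rw [hl.1] at this
  omega

lemma card_distincts_eq_singleRepeatCount_add (j s : ℕ) :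
    #(Nat.Partition.distincts s) = singleRepeatCount j 0 s + singleRepeatCount j 1 s := by
  classical
  simp only [singleRepeatCount, singleRepeat_zero_iff, singleRepeat_one_iff,
    Nat.card_eq_fintype_card, Fintype.card_subtype]
  rw [← card_filter_add_card_filter_not (fun l : s.Partition => j ∉ l.parts)]
  simp only [Nat.Partition.distincts, Finset.filter_filter, not_not]

lemma singleRepeatCount_add_succ (hj : 0 < j) :
    singleRepeatCount j m n + singleRepeatCount j (m + 1) n =
      if m * j ≤ n then #(Nat.Partition.distincts (n - m * j)) else 0 := by
  split_ifs with h
  · have h0 := singleRepeatCount_add (k := 0) hj h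
    rw [add_zero] at h0
    rw [h0, singleRepeatCount_add hj h, card_distincts_eq_singleRepeatCount_add j]
  · rw [singleRepeatCount_eq_zero (by omega), singleRepeatCount_eq_zero (by nlinarith)]


lemma singleRepeatCount_add_succ_comm (hj : 0 < j) (ha : 0 < a) :
    singleRepeatCount j a n + singleRepeatCount j (a + 1) n =
      singleRepeatCount a j n + singleRepeatCount a (j + 1) n := by
  rw [singleRepeatCount_add_succ hj, singleRepeatCount_add_succ ha, mul_comm]

lemma singleRepeatCount_one_eq_alternating_sum (ha : 0 < a) :
    (singleRepeatCount a 1 n : ℤ) = ∑ j ∈ Icc 1 n,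
      (-1) ^ (j + 1) * ((singleRepeatCount a j n : ℤ) + singleRepeatCount a (j + 1) n) := by
  have hvanish : singleRepeatCount a (n + 1) n = 0 := singleRepeatCount_eq_zero (by nlinarith)
  rw [← Ico_add_one_right_eq_Icc, sum_Ico_eq_sum_range, add_tsub_cancel_right]
  have := sum_range_sub' (fun k => (-1 : ℤ) ^ k * singleRepeatCount a (k + 1) n) n
  rw [hvanish, Nat.cast_zero, mul_zero, sub_zero, pow_zero, one_mul, zero_add] at this
  rw [← this]
  refine sum_congr rfl fun k _ => ?_
  rw [add_comm 1 k]
  ring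

end singleRepeatCount

lemma sum_neg_one_pow_mul_eq_sub {R : Type*} [CommRing R] (s : Finset ℕ) (f : ℕ → R) :
    ∑ j ∈ s, (-1) ^ (j + 1) * f j = ∑ j ∈ s with Odd j, f j - ∑ j ∈ s with Even j, f j := by
  rw [sum_filter, sum_filter, ← sum_sub_distrib]
  refine sum_congr rfl fun j _ => ?_
  rcases Nat.even_or_odd j with h | h
  · simp [h, h.add_one.neg_one_pow, Nat.not_odd_iff_even.mpr h]
  · simp [h, h.add_one.neg_one_pow, Nat.not_even_iff_odd.mpr h]

def negResidueParts (p r n : ℕ) : Finset ℕ := {a ∈ Icc 1 n | (a + r) % p = 0}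

lemma aModDistinct_eq_sum (p r n : ℕ) :
    aModDistinct p r n = ∑ a ∈ negResidueParts p r n, singleRepeatCount a 1 n := by
  classical
  have hparts : ∀ l ∈ Nat.Partition.distincts n,
      Multiset.card (l.parts.filter (fun x => (x + r) % p = 0)) =
        #{a ∈ negResidueParts p r n | a ∈ l.parts} := by
    intro l hl
    have hnodup : l.parts.Nodup := (mem_filter.mp hl).2
    rw [← Multiset.toFinset_card_of_nodup (hnodup.filter _)]
    congr 1
    ext a
    simp only [Multiset.mem_toFinset, Multiset.mem_filter, negResidueParts, mem_filter, mem_Icc]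
    exact ⟨fun ⟨ha, hr⟩ => ⟨⟨⟨l.parts_pos ha, l.le_of_mem_parts ha⟩, hr⟩, ha⟩,
      fun ⟨⟨_, hr⟩, ha⟩ => ⟨ha, hr⟩⟩
  have hcount : ∀ a,
      singleRepeatCount a 1 n = #{l ∈ Nat.Partition.distincts n | a ∈ l.parts} := by
    intro a
    simp only [singleRepeatCount, Multiset.singleRepeat_one_iff, Nat.card_eq_fintype_card,
      Fintype.card_subtype, Nat.Partition.distincts, Finset.filter_filter]
  rw [aModDistinct, sum_congr rfl hparts]
  simp_rw [hcount]
  exact sum_card_bipartiteAbove_eq_sum_card_bipartiteBelow (fun (l : n.Partition) a => a ∈ l.parts)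

lemma card_exists_singleRepeat_eq_sum {n : ℕ} (pre mult : ℕ → Prop) [DecidablePred pre]
    (hmult : ∀ m, mult m → 2 ≤ m) (M : Finset ℕ) (hM : ∀ m ∈ M, mult m)
    (hM' : ∀ m ≤ n, mult m → m ∈ M) :
    Nat.card {l : n.Partition //
      ∃ j, pre j ∧ mult (l.parts.count j) ∧ ∀ i, i ≠ j → l.parts.count i ≤ 1} =
      ∑ j ∈ Icc 1 n with pre j, ∑ m ∈ M, singleRepeatCount j m n := by
  classical
  have hset : ({l : n.Partition |
      ∃ j, pre j ∧ mult (l.parts.count j) ∧ ∀ i, i ≠ j → l.parts.count i ≤ 1} : Finset _) =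
      ({j ∈ Icc 1 n | pre j} ×ˢ M).biUnion
        fun q => {l : n.Partition | l.parts.SingleRepeat q.1 q.2} := by
    ext l
    simp only [Finset.mem_filter, mem_univ, true_and, mem_biUnion, mem_product, mem_Icc,
      Prod.exists]
    constructor
    · rintro ⟨j, hpre, hm, hle⟩
      have hmem : j ∈ l.parts := Multiset.count_pos.mp (by linarith [hmult _ hm])
      have hcount := l.count_mul_le j
      have hj := l.parts_pos hmem
      exact ⟨j, _, ⟨⟨⟨hj, l.le_of_mem_parts hmem⟩, hpre⟩, hM' _ (by nlinarith) hm⟩, rfl, hle⟩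
    · rintro ⟨j, m, ⟨⟨-, hpre⟩, hm⟩, rfl, hle⟩
      exact ⟨j, hpre, hM _ hm, hle⟩
  have hdisj : (({j ∈ Icc 1 n | pre j} ×ˢ M : Finset (ℕ × ℕ)) : Set (ℕ × ℕ)).PairwiseDisjoint
      fun q => ({l | l.parts.SingleRepeat q.1 q.2} : Finset n.Partition) := by
    rintro ⟨j, m⟩ - ⟨j', m'⟩ hq' hne
    simp only [Function.onFun, disjoint_left, Finset.mem_filter, mem_univ, true_and]
    rintro l ⟨rfl, hle⟩ ⟨hcount, -⟩
    have h2 := hmult _ (hM _ (mem_product.mp hq').2)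
    rcases eq_or_ne j' j with rfl | hj
    · exact hne (by rw [hcount])
    · have := hle j' hj
      omega
  rw [Nat.card_eq_fintype_card, Fintype.card_subtype, hset, card_biUnion hdisj, sum_product]
  simp only [singleRepeatCount, Nat.card_eq_fintype_card, Fintype.card_subtype]

def AdmissibleMult (p r m : ℕ) : Prop :=
  2 ≤ m ∧ p - r ≤ m ∧ ((m + r) % p = 0 ∨ (m + r) % p = 1 % p)

def admissibleMults (p r n : ℕ) : Finset ℕ :=
  negResidueParts p r n ∪ (negResidueParts p r n).map (addRightEmbedding 1)

section admissibleMults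

variable {p r n m : ℕ}

lemma add_one_mod_eq_one_mod_iff {x : ℕ} : (x + 1) % p = 1 % p ↔ x % p = 0 := by
  rw [← Nat.zero_mod p]
  exact ⟨Nat.ModEq.add_right_cancel' 1, Nat.ModEq.add_right 1⟩

lemma admissibleMult_of_mem_admissibleMults (hpr : r + 2 ≤ p) (hm : m ∈ admissibleMults p r n) :
    AdmissibleMult p r m := by
  simp only [admissibleMults, negResidueParts, mem_union, mem_map, mem_filter, mem_Icc,
    addRightEmbedding_apply] at hm
  rcases hm with ⟨⟨hm1, -⟩, hr⟩ | ⟨a, ⟨⟨ha1, -⟩, hr⟩, rfl⟩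
  · have := Nat.le_of_dvd (by omega) (Nat.dvd_of_mod_eq_zero hr)
    exact ⟨by omega, by omega, Or.inl hr⟩
  · have := Nat.le_of_dvd (by omega) (Nat.dvd_of_mod_eq_zero hr)
    exact ⟨by omega, by omega, Or.inr (by rwa [add_right_comm, add_one_mod_eq_one_mod_iff])⟩

lemma mem_admissibleMults_of_admissibleMult (hmn : m ≤ n) (hm : AdmissibleMult p r m) :
    m ∈ admissibleMults p r n := by
  obtain ⟨h2, -, hr | hr⟩ := hm
  · exact mem_union_left _ (mem_filter.mpr ⟨mem_Icc.mpr ⟨by omega, hmn⟩, hr⟩)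
  · refine mem_union_right _
      (mem_map.mpr ⟨m - 1, mem_filter.mpr ⟨mem_Icc.mpr ⟨by omega, by omega⟩, ?_⟩, by simp; omega⟩)
    rwa [← add_one_mod_eq_one_mod_iff, add_right_comm, Nat.sub_add_cancel (by omega)]

lemma sum_admissibleMults {M : Type*} [AddCommMonoid M] (hpr : r + 2 ≤ p) (f : ℕ → M) :
    ∑ m ∈ admissibleMults p r n, f m = ∑ a ∈ negResidueParts p r n, (f a + f (a + 1)) := by
  have hdisj : Disjoint (negResidueParts p r n)
      ((negResidueParts p r n).map (addRightEmbedding 1)) := by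
    simp only [disjoint_left, negResidueParts, mem_map, mem_filter, addRightEmbedding_apply]
    rintro _ ⟨-, hr⟩ ⟨a, ⟨-, hr'⟩, rfl⟩
    have h1 := (add_one_mod_eq_one_mod_iff (p := p)).mpr hr'
    rw [add_right_comm, hr, Nat.mod_eq_of_lt (by omega : 1 < p)] at h1
    exact zero_ne_one h1
  rw [admissibleMults, sum_union hdisj, sum_map, sum_add_distrib]
  rfl

end admissibleMults

lemma card_admissible_singleRepeat_eq_sum {p r n : ℕ} (hpr : r + 2 ≤ p) (pre : ℕ → Prop)
    [DecidablePred pre] :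
    Nat.card {l : n.Partition //
      ∃ j, pre j ∧ 2 ≤ l.parts.count j ∧ p - r ≤ l.parts.count j ∧
        ((l.parts.count j + r) % p = 0 ∨ (l.parts.count j + r) % p = 1 % p) ∧
        ∀ i, i ≠ j → l.parts.count i ≤ 1} =
      ∑ j ∈ Icc 1 n with pre j, ∑ a ∈ negResidueParts p r n,
        (singleRepeatCount j a n + singleRepeatCount j (a + 1) n) := by
  simp_rw [← sum_admissibleMults hpr]
  simpa only [AdmissibleMult, and_assoc] using
    card_exists_singleRepeat_eq_sum pre (AdmissibleMult p r) (fun _ hm => hm.1) _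
    (fun _ => admissibleMult_of_mem_admissibleMults hpr)
    (fun _ => mem_admissibleMults_of_admissibleMult)

theorem aMod_eq_g_general (p r : ℕ) (hpr : r + 2 ≤ p) (n : ℕ) :
    (aModDistinct p r n : ℤ) = (gOdd p r n : ℤ) - (gEven p r n : ℤ) := by
  have hpos : ∀ a ∈ negResidueParts p r n, 0 < a := fun a ha =>
    (mem_Icc.mp (mem_filter.mp ha).1).1
  calc (aModDistinct p r n : ℤ)
      = ∑ a ∈ negResidueParts p r n, (singleRepeatCount a 1 n : ℤ) := by
        rw [aModDistinct_eq_sum, Nat.cast_sum]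
    _ = ∑ a ∈ negResidueParts p r n, ∑ j ∈ Icc 1 n,
          (-1) ^ (j + 1) * ((singleRepeatCount j a n : ℤ) + singleRepeatCount j (a + 1) n) := by
        refine sum_congr rfl fun a ha => ?_
        rw [singleRepeatCount_one_eq_alternating_sum (hpos a ha)]
        refine sum_congr rfl fun j hj => ?_
        rw [← Nat.cast_add, ← Nat.cast_add,
          singleRepeatCount_add_succ_comm (mem_Icc.mp hj).1 (hpos a ha)]
    _ = ∑ j ∈ Icc 1 n, (-1) ^ (j + 1) * ∑ a ∈ negResidueParts p r n,
          ((singleRepeatCount j a n : ℤ) + singleRepeatCount j (a + 1) n) := by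
        rw [sum_comm]
        simp_rw [mul_sum]
    _ = gOdd p r n - gEven p r n := by
        rw [sum_neg_one_pow_mul_eq_sub, gOdd, gEven, card_admissible_singleRepeat_eq_sum hpr,
          card_admissible_singleRepeat_eq_sum hpr]
        push_cast
        rfl

theorem aMod_eq_g (p r : ℕ) (hpr : r + 2 ≤ p) (n : ℕ) (hn : 1 ≤ n) :
    (aModDistinct p r n : ℤ) = (gOdd p r n : ℤ) - (gEven p r n : ℤ) :=
  aMod_eq_g_general p r hpr n
end

section
/- As formal power series in q, the generating function for the total number of parts congruent to −r modulo p in partitions into distinct parts satisfies ∑_{n≥0} a_r(n,p) q^n = (−q;q)_∞ · ∑_{n≥1} q^{pn−r}/(1 + q^{pn−r}), where p ≥ r + 2 are non-negative integers. -/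
/-!
Compare coefficients of `q^N`. Only the factors `1 + q^j` with `j ≤ N` of `(-q;q)_∞` matter, and
only the terms of the tail sum with `m = pn - r ≤ N` (the `n`-th term has order `pn - r ≥ n`). For
a part `m`, `q^m/(1 + q^m) · ∏_{j ≤ N} (1 + q^j) = q^m ∏_{j ≤ N, j ≠ m} (1 + q^j)` enumerates the
sets `t ⊆ {1, …, N}` containing `m` by `q^{Σ t}`, so summing over the `m ≡ -r (mod p)` counts every
set with multiplicity `#{m ∈ t | m ≡ -r}`. Sets `t ⊆ {1, …, N}` with `Σ t = N` are exactly the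
partitions of `N` into distinct parts.
-/

open PowerSeries

/-- The infinite product `(-q;q)_∞ = ∏_{j ≥ 1} (1 + q^j)` as a formal power series:
its `n`-th coefficient agrees with that of any truncation past `n`. -/
noncomputable def negPochhammer : PowerSeries ℚ :=
  PowerSeries.mk fun n =>
    coeff n (∏ j ∈ Finset.Icc 1 n, (1 + (X : PowerSeries ℚ) ^ j))

/-- The series `∑_{n ≥ 1} q^{pn - r} / (1 + q^{pn - r})`: since the `n`-th summand has order
`pn - r ≥ n` (as `p ≥ r + 2`), the `N`-th coefficient agrees with that of the partial sum. -/
noncomputable def tailSum (p r : ℕ) : PowerSeries ℚ :=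
  PowerSeries.mk fun N =>
    coeff N (∑ n ∈ Finset.Icc 1 N,
      (X : PowerSeries ℚ) ^ (p * n - r) * (1 + (X : PowerSeries ℚ) ^ (p * n - r))⁻¹)

open Finset

theorem Finset.sum_filter_mem_powerset {α M : Type*} [DecidableEq α] [AddCommMonoid M]
    {s : Finset α} {a : α} (ha : a ∈ s) (f : Finset α → M) :
    ∑ t ∈ s.powerset with a ∈ t, f t = ∑ t ∈ (s.erase a).powerset, f (insert a t) := by
  have notMem_of_subset {t : Finset α} (ht : t ∈ (s.erase a).powerset) : a ∉ t :=
    fun h => notMem_erase a s (mem_powerset.1 ht h)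
  conv_lhs => rw [← insert_erase ha]
  rw [sum_filter, sum_powerset_insert (notMem_erase a s),
    sum_eq_zero fun t ht => if_neg (notMem_of_subset ht), zero_add]
  exact sum_congr rfl fun t _ => if_pos (mem_insert_self a t)

theorem Finset.filter_powerset_Icc_sum_eq {i N : ℕ} (hi : i ≤ N) :
    {t ∈ (Icc 1 N).powerset | ∑ j ∈ t, j = i} = {t ∈ (Icc 1 i).powerset | ∑ j ∈ t, j = i} := by
  ext t
  simp only [mem_filter, mem_powerset]
  refine and_congr_left fun hsum => ⟨fun h j hj => ?_, fun h => h.trans (Icc_subset_Icc_right hi)⟩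
  exact mem_Icc.2 ⟨(mem_Icc.1 (h hj)).1,
    hsum ▸ single_le_sum (f := fun j => j) (fun _ _ => Nat.zero_le _) hj⟩

namespace PowerSeries

variable {R : Type*} [CommSemiring R]

theorem coeff_mul_congr {f f' g g' : R⟦X⟧} {n : ℕ}
    (hf : ∀ i ≤ n, coeff i f = coeff i f') (hg : ∀ i ≤ n, coeff i g = coeff i g') :
    coeff n (f * g) = coeff n (f' * g') := by
  simp only [coeff_mul]
  refine sum_congr rfl fun ij hij => ?_
  rw [HasAntidiagonal.mem_antidiagonal] at hij
  rw [hf ij.1 (by omega), hg ij.2 (by omega)]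

theorem coeff_sum_X_pow_mul {ι : Type*} (A : Finset ι) (e : ι → ℕ) (h : ι → R⟦X⟧) (n : ℕ) :
    coeff n (∑ a ∈ A, X ^ e a * h a) = coeff n (∑ a ∈ A with e a ≤ n, X ^ e a * h a) := by
  rw [map_sum, map_sum, sum_filter]
  refine sum_congr rfl fun a _ => ?_
  split_ifs with ha
  · rfl
  · rw [coeff_X_pow_mul', if_neg ha]

theorem coeff_sum_nsmul_X_pow_sum (S : Finset (Finset ℕ)) (c : Finset ℕ → ℕ) (n : ℕ) :
    coeff n (∑ t ∈ S, c t • X ^ (∑ j ∈ t, j) : R⟦X⟧) = ∑ t ∈ S with ∑ j ∈ t, j = n, (c t : R) := by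
  rw [map_sum, sum_filter]
  refine sum_congr rfl fun t _ => ?_
  rw [map_nsmul, coeff_X_pow]
  split_ifs <;> simp_all

theorem prod_one_add_X_pow (s : Finset ℕ) :
    ∏ j ∈ s, (1 + X ^ j : R⟦X⟧) = ∑ t ∈ s.powerset, X ^ (∑ j ∈ t, j) := by
  rw [prod_one_add]
  exact sum_congr rfl fun t _ => prod_pow_eq_pow_sum t id X

theorem coeff_prod_one_add_X_pow (s : Finset ℕ) (n : ℕ) :
    coeff n (∏ j ∈ s, (1 + X ^ j : R⟦X⟧)) = #{t ∈ s.powerset | ∑ j ∈ t, j = n} := by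
  simpa [prod_one_add_X_pow] using coeff_sum_nsmul_X_pow_sum (R := R) s.powerset 1 n

end PowerSeries

namespace PowerSeries

variable {k : Type*} [Field k]

theorem X_pow_mul_inv_mul_prod_one_add_X_pow {s : Finset ℕ} {m : ℕ} (hm : m ∈ s) (hm0 : m ≠ 0) :
    X ^ m * (1 + X ^ m)⁻¹ * ∏ j ∈ s, (1 + X ^ j : k⟦X⟧) =
      ∑ t ∈ s.powerset with m ∈ t, X ^ (∑ j ∈ t, j) := by
  have hunit : (1 + X ^ m : k⟦X⟧)⁻¹ * (1 + X ^ m) = 1 :=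
    PowerSeries.inv_mul_cancel _ (by simp [hm0])
  rw [← mul_prod_erase s _ hm, mul_assoc, ← mul_assoc _ (1 + X ^ m), hunit, one_mul,
    prod_one_add_X_pow, mul_sum, sum_filter_mem_powerset hm]
  refine sum_congr rfl fun t ht => ?_
  rw [sum_insert fun h => notMem_erase m s (mem_powerset.1 ht h), pow_add]

theorem sum_X_pow_mul_inv_mul_prod_one_add_X_pow {s : Finset ℕ} (hs : 0 ∉ s) (P : ℕ → Prop)
    [DecidablePred P] :
    (∑ m ∈ s with P m, X ^ m * (1 + X ^ m)⁻¹) * ∏ j ∈ s, (1 + X ^ j : k⟦X⟧) =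
      ∑ t ∈ s.powerset, #{m ∈ t | P m} • X ^ (∑ j ∈ t, j) := by
  rw [sum_mul]
  calc ∑ m ∈ s with P m, X ^ m * (1 + X ^ m)⁻¹ * ∏ j ∈ s, (1 + X ^ j : k⟦X⟧)
      = ∑ m ∈ s with P m, ∑ t ∈ s.powerset with m ∈ t, X ^ (∑ j ∈ t, j) := by
        refine sum_congr rfl fun m hm => ?_
        have hms := (mem_filter.1 hm).1
        exact X_pow_mul_inv_mul_prod_one_add_X_pow hms (ne_of_mem_of_not_mem hms hs)
    _ = ∑ t ∈ s.powerset, ∑ m ∈ t with P m, X ^ (∑ j ∈ t, j) := by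
        refine sum_comm' fun m t => ?_
        simp only [mem_filter, mem_powerset]
        exact ⟨fun ⟨⟨_, hP⟩, hts, hmt⟩ => ⟨⟨hmt, hP⟩, hts⟩,
          fun ⟨⟨hmt, hP⟩, hts⟩ => ⟨⟨hts hmt, hP⟩, hts, hmt⟩⟩
    _ = ∑ t ∈ s.powerset, #{m ∈ t | P m} • X ^ (∑ j ∈ t, j) := by
        simp only [sum_const]

end PowerSeries

theorem Nat.Partition.sum_distincts_eq_sum_powerset {M : Type*} [AddCommMonoid M] (n : ℕ)
    (f : Finset ℕ → M) :
    ∑ π ∈ Nat.Partition.distincts n, f π.parts.toFinset =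
      ∑ t ∈ (Icc 1 n).powerset with ∑ j ∈ t, j = n, f t := by
  have mem_distincts {π : n.Partition} : π ∈ distincts n ↔ π.parts.Nodup := by
    simp [distincts]
  refine sum_bij' (fun π _ => π.parts.toFinset)
    (fun t ht => ⟨t.val, fun {i} hi => ?_, (sum_val t).trans (mem_filter.1 ht).2⟩)
    (fun π hπ => ?_) (fun t ht => ?_)
    (fun π hπ => ?_) (fun t ht => ?_) (fun π hπ => rfl)
  · exact (mem_Icc.1 (mem_powerset.1 (mem_filter.1 ht).1 hi)).1
  · rw [mem_distincts] at hπ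
    refine mem_filter.2 ⟨mem_powerset.2 fun i hi => ?_, ?_⟩
    · rw [Multiset.mem_toFinset] at hi
      exact mem_Icc.2 ⟨π.parts_pos hi, π.parts_sum ▸ Multiset.le_sum_of_mem hi⟩
    · rw [sum_eq_multiset_sum, Multiset.toFinset_val, hπ.dedup, Multiset.map_id', π.parts_sum]
  · exact mem_distincts.2 t.nodup
  · rw [mem_distincts] at hπ
    ext1
    simp [hπ.dedup]
  · exact val_toFinset t

theorem aModDistinct_eq_sum_powerset (p r n : ℕ) :
    aModDistinct p r n =
      ∑ t ∈ (Icc 1 n).powerset with ∑ j ∈ t, j = n, #{x ∈ t | (x + r) % p = 0} := by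
  rw [aModDistinct, ← Nat.Partition.sum_distincts_eq_sum_powerset]
  refine sum_congr rfl fun π hπ => ?_
  have hnd : π.parts.Nodup := (mem_filter.1 hπ).2
  rw [← Multiset.toFinset_filter, Multiset.toFinset_card_of_nodup (hnd.filter _)]

theorem coeff_negPochhammer {i N : ℕ} (hi : i ≤ N) :
    coeff i negPochhammer = coeff i (∏ j ∈ Icc 1 N, (1 + X ^ j : ℚ⟦X⟧)) := by
  rw [negPochhammer, coeff_mk, coeff_prod_one_add_X_pow, coeff_prod_one_add_X_pow,
    filter_powerset_Icc_sum_eq hi]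

section Residues

variable {p r : ℕ}

theorem add_le_mul_of_lt (hrp : r < p) {n : ℕ} (hn : n ≠ 0) : n + r ≤ p * n := by
  nlinarith [Nat.one_le_iff_ne_zero.2 hn]

theorem sum_filter_mul_sub_eq_sum_filter_mod {M : Type*} [AddCommMonoid M] (hrp : r < p) (i : ℕ)
    (g : ℕ → M) :
    ∑ n ∈ Icc 1 i with p * n - r ≤ i, g (p * n - r) = ∑ m ∈ Icc 1 i with (m + r) % p = 0, g m := by
  have mul_div {m : ℕ} (hm : (m + r) % p = 0) : p * ((m + r) / p) = m + r :=
    Nat.mul_div_cancel' (Nat.dvd_of_mod_eq_zero hm)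
  refine sum_nbij' (fun n => p * n - r) (fun m => (m + r) / p) (fun n hn => ?_) (fun m hm => ?_)
    (fun n hn => ?_) (fun m hm => ?_) (fun _ _ => rfl)
  · simp only [mem_filter, mem_Icc] at hn ⊢
    have := add_le_mul_of_lt hrp (n := n) (by omega)
    refine ⟨by omega, ?_⟩
    rw [Nat.sub_add_cancel (by omega), Nat.mul_mod_right]
  · simp only [mem_filter, mem_Icc] at hm ⊢
    have hq := mul_div hm.2
    generalize (m + r) / p = q at hq ⊢
    have hq0 : q ≠ 0 := by rintro rfl; omega
    have := add_le_mul_of_lt hrp hq0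
    omega
  · simp only [mem_filter, mem_Icc] at hn
    have := add_le_mul_of_lt hrp (n := n) (by omega)
    rw [Nat.sub_add_cancel (by omega), Nat.mul_div_cancel_left n (by omega)]
  · simp only [mem_filter, mem_Icc] at hm
    have := mul_div hm.2
    omega

theorem coeff_tailSum (hrp : r < p) {i N : ℕ} (hi : i ≤ N) :
    coeff i (tailSum p r) =
      coeff i (∑ m ∈ Icc 1 N with (m + r) % p = 0, X ^ m * (1 + X ^ m : ℚ⟦X⟧)⁻¹) := by
  rw [tailSum, coeff_mk,
    coeff_sum_X_pow_mul _ (fun n => p * n - r) (fun n => (1 + X ^ (p * n - r) : ℚ⟦X⟧)⁻¹),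
    coeff_sum_X_pow_mul _ (fun m => m) (fun m => (1 + X ^ m : ℚ⟦X⟧)⁻¹), filter_filter,
    sum_filter_mul_sub_eq_sum_filter_mod hrp i (fun m => X ^ m * (1 + X ^ m : ℚ⟦X⟧)⁻¹)]
  congr 2
  ext m
  simp only [mem_filter, mem_Icc]
  omega

end Residues

theorem aMod_genFun (p r : ℕ) (hpr : r + 2 ≤ p) :
    PowerSeries.mk (fun n => (aModDistinct p r n : ℚ)) = negPochhammer * tailSum p r := by
  ext N
  rw [coeff_mk, mul_comm, coeff_mul_congr (fun i hi => coeff_tailSum (by omega) hi)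
    (fun i hi => coeff_negPochhammer hi),
    sum_X_pow_mul_inv_mul_prod_one_add_X_pow (by simp), coeff_sum_nsmul_X_pow_sum,
    aModDistinct_eq_sum_powerset, Nat.cast_sum]
end

section
/- Let p ≥ 2 be an integer. For all n ≥ 0, a(n,p) ≡ o_p(n) (mod p), where a(n,p) is the total number of parts congruent to 0 modulo p counted over all partitions of n into parts appearing at most p − 1 times, and o_p(n) is the number of partitions of n in which the set of parts congruent to 0 modulo p is a singleton. -/
/-- `a(n,p)`: total number of parts congruent to `0` modulo `p` in all partitions of `n`
into parts appearing at most `p - 1` times. -/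
def aCnt (n p : ℕ) : ℕ :=
  ∑ lam ∈ Finset.univ.filter
      (fun lam : n.Partition => ∀ j ∈ lam.parts, lam.parts.count j ≤ p - 1),
    (lam.parts.filter (fun x => p ∣ x)).card

/-- `o_p(n)`: partitions of `n` in which the set of parts congruent to `0` modulo `p`
is a singleton. -/
noncomputable def oCnt (p n : ℕ) : ℕ :=
  Nat.card {lam : n.Partition //
    ∃ j, p ∣ j ∧ j ∈ lam.parts ∧ ∀ i ∈ lam.parts, p ∣ i → i = j}

/-!
Both sides split as sums over the multiples `j > 0` of `p`: `a(n,p)` as the total multiplicity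
`A_j(n)` of `j` over partitions with all multiplicities `< p`, and `o_p(n)` as the number
`O_j(n)` of partitions of `n` whose only multiple of `p` is `j`. Removing one copy of `j` gives
`O_j(n) = O_j(n - j) + G(n - j)`, where `G` counts partitions with no part divisible by `p`, and
`A_j(n) ≡ A_j(n - j) + R(n - j) (mod p)`, where `R` counts partitions with all multiplicities
`< p`: the partitions in which adding `j` would create multiplicity `p` each contribute `p ≡ 0`.
Glaisher's theorem `R = G` closes the induction on `n`.
-/

theorem Multiset.forall_count_cons_lt_iff {α : Type*} [DecidableEq α] {s : Multiset α} {a : α}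
    {m : ℕ} :
    (∀ i ∈ a ::ₘ s, (a ::ₘ s).count i < m) ↔ s.count a + 1 < m ∧ ∀ i ∈ s, s.count i < m := by
  simp only [Multiset.mem_cons, forall_eq_or_imp, Multiset.count_cons_self]
  refine and_congr_right fun ha => forall₂_congr fun i _ => ?_
  rcases eq_or_ne i a with rfl | hia
  · simp only [Multiset.count_cons_self]; omega
  · rw [Multiset.count_cons_of_ne hia]

namespace Nat.Partition

open Finset

theorem sum_filter_mem_parts {M : Type*} [AddCommMonoid M] {n j : ℕ} (hj : 1 ≤ j) (hjn : j ≤ n)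
    (F : Multiset ℕ → M) :
    ∑ μ ∈ univ.filter (fun μ : n.Partition => j ∈ μ.parts), F μ.parts =
      ∑ ν : (n - j).Partition, F (j ::ₘ ν.parts) := by
  refine (sum_subtype (F := inferInstance) _ (p := fun μ : n.Partition => j ∈ μ.parts)
    (by simp) _).trans ?_
  exact (Fintype.sum_equiv (partitionWithPartEquiv hj hjn).symm _ _ (fun ν => by simp)).symm

theorem card_filter_parts_eq_sum_count {n : ℕ} (μ : n.Partition) (P : ℕ → Prop)
    [DecidablePred P] :
    Multiset.card (μ.parts.filter P) = ∑ j ∈ (Icc 1 n).filter P, μ.parts.count j := by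
  rw [← Multiset.sum_count_eq_card (s := (Icc 1 n).filter P)]
  · exact sum_congr rfl fun j hj => Multiset.count_filter_of_pos (mem_filter.1 hj).2
  · intro i hi
    obtain ⟨hi, hPi⟩ := Multiset.mem_filter.1 hi
    exact mem_filter.2 ⟨mem_Icc.2 ⟨μ.parts_pos hi, μ.le_of_mem_parts hi⟩, hPi⟩

theorem sum_count_countRestricted_eq_sum_sub {p j n : ℕ} (hp : 0 < p) (hj : 1 ≤ j)
    (hjn : j ≤ n) :
    ∑ μ ∈ countRestricted n p, (μ.parts.count j : ZMod p) =
      ∑ ν ∈ countRestricted (n - j) p, ((ν.parts.count j : ZMod p) + 1) := by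
  have cons_term (s : Multiset ℕ) :
      (if ∀ i ∈ j ::ₘ s, (j ::ₘ s).count i < p then (((j ::ₘ s).count j : ℕ) : ZMod p) else 0) =
        if ∀ i ∈ s, s.count i < p then (s.count j : ZMod p) + 1 else 0 := by
    by_cases hs : ∀ i ∈ s, s.count i < p
    · rw [if_pos hs]
      by_cases hjs : s.count j + 1 < p
      · rw [if_pos (Multiset.forall_count_cons_lt_iff.2 ⟨hjs, hs⟩), Multiset.count_cons_self,
          Nat.cast_succ]
      · rw [if_neg fun h => hjs (Multiset.forall_count_cons_lt_iff.1 h).1]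
        have hjs' : s.count j < p := by
          by_cases hmem : j ∈ s
          · exact hs j hmem
          · rwa [Multiset.count_eq_zero_of_notMem hmem]
        rw [← Nat.cast_add_one, show s.count j + 1 = p by omega, ZMod.natCast_self]
    · rw [if_neg hs, if_neg fun h => hs (Multiset.forall_count_cons_lt_iff.1 h).2]
  simp only [countRestricted, sum_filter]
  rw [← sum_filter_of_ne (p := fun μ : n.Partition => j ∈ μ.parts), sum_filter_mem_parts hj hjn
    (fun s => if ∀ i ∈ s, s.count i < p then ((s.count j : ℕ) : ZMod p) else 0)]
  · exact sum_congr rfl fun ν _ => cons_term ν.parts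
  · intro μ _ h
    by_contra hj
    simp [Multiset.count_eq_zero_of_notMem hj] at h

def soleMultiple (n p j : ℕ) : Finset n.Partition :=
  univ.filter fun μ => j ∈ μ.parts ∧ ∀ i ∈ μ.parts, p ∣ i → i = j

theorem card_soleMultiple_eq_add {n p j : ℕ} (hpj : p ∣ j) (hj : 1 ≤ j) (hjn : j ≤ n) :
    #(soleMultiple n p j) = #(soleMultiple (n - j) p j) + #(restricted (n - j) (¬ p ∣ ·)) := by
  have hfilter : soleMultiple n p j =
      (univ.filter fun μ : n.Partition => j ∈ μ.parts).filter
        fun μ => ∀ i ∈ μ.parts, p ∣ i → i = j := by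
    rw [filter_filter]; rfl
  rw [hfilter, card_filter, sum_filter_mem_parts hj hjn
    (fun s => if ∀ i ∈ s, p ∣ i → i = j then 1 else 0)]
  simp only [Multiset.forall_mem_cons, imp_true_iff, true_and]
  rw [← card_filter, ← card_filter_add_card_filter_not (fun ν : (n - j).Partition => j ∈ ν.parts),
    filter_filter, filter_filter]
  congr 2
  · exact filter_congr fun _ _ => and_comm
  · refine filter_congr fun ν _ => ⟨fun ⟨hsole, hjν⟩ i hi hpi => hjν (hsole i hi hpi ▸ hi),
      fun hndvd => ⟨fun i hi hpi => absurd hpi (hndvd i hi), fun hjν => hndvd j hjν hpj⟩⟩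

theorem sum_count_countRestricted_eq_card_soleMultiple {p j : ℕ} (hpj : p ∣ j) (hj : 0 < j)
    (n : ℕ) : ∑ μ ∈ countRestricted n p, (μ.parts.count j : ZMod p) = #(soleMultiple n p j) := by
  have hp : 0 < p := Nat.pos_of_dvd_of_pos hpj hj
  induction n using Nat.strong_induction_on with
  | _ n ih =>
    by_cases hjn : j ≤ n
    · rw [sum_count_countRestricted_eq_sum_sub hp hj hjn, sum_add_distrib, ih (n - j) (by omega),
        card_soleMultiple_eq_add hpj hj hjn, card_restricted_eq_card_countRestricted _ hp]
      simp
    · have hjμ (μ : n.Partition) : j ∉ μ.parts := fun h => hjn (μ.le_of_mem_parts h)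
      rw [sum_eq_zero fun μ _ => by rw [Multiset.count_eq_zero_of_notMem (hjμ μ), Nat.cast_zero],
        soleMultiple, filter_false_of_mem fun μ _ h => hjμ μ h.1, card_empty, Nat.cast_zero]

end Nat.Partition

open Finset Nat.Partition

theorem aCnt_eq_sum (n p : ℕ) :
    aCnt n p = ∑ j ∈ (Icc 1 n).filter (p ∣ ·), ∑ μ ∈ countRestricted n p, μ.parts.count j := by
  have hrestricted : univ.filter (fun μ : n.Partition => ∀ j ∈ μ.parts, μ.parts.count j ≤ p - 1) =
      countRestricted n p :=
    filter_congr fun μ _ => forall₂_congr fun j hj => by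
      have := Multiset.count_pos.2 hj
      omega
  rw [aCnt, hrestricted, sum_comm]
  exact sum_congr rfl fun μ _ => card_filter_parts_eq_sum_count μ (p ∣ ·)

theorem oCnt_eq_sum (p n : ℕ) :
    oCnt p n = ∑ j ∈ (Icc 1 n).filter (p ∣ ·), #(soleMultiple n p j) := by
  classical
  rw [oCnt, Nat.card_eq_fintype_card, Fintype.card_subtype, ← card_biUnion]
  · congr 1
    ext μ
    simp only [mem_filter, mem_univ, true_and, mem_biUnion, mem_Icc, soleMultiple]
    constructor
    · rintro ⟨j, hpj, hj, hsole⟩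
      exact ⟨j, ⟨⟨μ.parts_pos hj, μ.le_of_mem_parts hj⟩, hpj⟩, hj, hsole⟩
    · rintro ⟨j, ⟨-, hpj⟩, hj, hsole⟩
      exact ⟨j, hpj, hj, hsole⟩
  · intro j hj j' _ hne
    refine disjoint_left.2 fun μ hμ hμ' => hne ?_
    exact (mem_filter.1 hμ').2.2 j (mem_filter.1 hμ).2.1 (mem_filter.1 hj).2

theorem aCnt_modEq_oCnt_general (p : ℕ) (n : ℕ) :
    aCnt n p ≡ oCnt p n [MOD p] := by
  rw [← ZMod.natCast_eq_natCast_iff, aCnt_eq_sum, oCnt_eq_sum]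
  push_cast
  refine sum_congr rfl fun j hj => ?_
  obtain ⟨hj, hpj⟩ := mem_filter.1 hj
  exact sum_count_countRestricted_eq_card_soleMultiple hpj (mem_Icc.1 hj).1 n

theorem aCnt_modEq_oCnt (p : ℕ) (hp : 2 ≤ p) (n : ℕ) :
    aCnt n p ≡ oCnt p n [MOD p] :=
  aCnt_modEq_oCnt_general p n
end

section
/- Let p ≥ 2. For all n ≥ 0, the number of partitions of n in which the set of parts divisible by p is a singleton and the number of parts divisible by p is odd equals the number of partitions of n into parts either not divisible by p, or congruent to p modulo 2p, such that the set of parts congruent to p modulo 2p is a singleton. -/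
/-- `o_{p,o}(n)`: partitions of `n` whose set of parts divisible by `p` is a singleton and
in which the number of parts divisible by `p` (counted with multiplicity) is odd. -/
noncomputable def oPO (p n : ℕ) : ℕ :=
  Nat.card {lam : n.Partition //
    (∃ j, p ∣ j ∧ j ∈ lam.parts ∧ ∀ i ∈ lam.parts, p ∣ i → i = j) ∧
      Odd (lam.parts.filter (fun i => p ∣ i)).card}

/-- `h_p(n,p)`: partitions of `n` into parts either not divisible by `p` or congruent to
`p` modulo `2p`, in which the set of parts congruent to `p` modulo `2p` is a singleton. -/
noncomputable def hP (p n : ℕ) : ℕ :=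
  Nat.card {lam : n.Partition //
    (∀ j ∈ lam.parts, ¬ p ∣ j ∨ j % (2 * p) = p) ∧
      ∃ j, j % (2 * p) = p ∧ j ∈ lam.parts ∧ ∀ i ∈ lam.parts, i % (2 * p) = p → i = j}

/-! In both counts the parts divisible by `p` form a single block of `k` copies of `p * v`,
with `k` odd on the left and `v` odd on the right (`p * v ≡ p [MOD 2 * p]` iff `v` is odd).
Moving the power of two from one factor to the other,
`(k, v) ↦ (oddPart k * 2 ^ ν₂ v, 2 ^ ν₂ k * oddPart v)`, keeps `k * v` and hence the size of
the partition, is an involution, and exchanges the two parity conditions. -/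

theorem Nat.ordProj_ordCompl_mul_ordProj {q x y : ℕ} (hq : q.Prime) (hx : x ≠ 0) :
    ordProj[q] (ordCompl[q] x * ordProj[q] y) = ordProj[q] y := by
  rw [Nat.ordProj_mul q (Nat.ordCompl_pos q hx).ne' (Nat.ordProj_pos y q).ne',
    Nat.factorization_ordCompl, Finsupp.erase_same, pow_zero, one_mul, Nat.ordProj_self_pow hq]

theorem Nat.ordCompl_ordCompl_mul_ordProj {q x y : ℕ} (hq : q.Prime) (hx : x ≠ 0) :
    ordCompl[q] (ordCompl[q] x * ordProj[q] y) = ordCompl[q] x := by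
  rw [Nat.ordCompl_mul, Nat.ordCompl_self_pow hq, mul_one,
    (Nat.ordCompl_eq_self_iff_zero_or_not_dvd _ hq).mpr (Or.inr (Nat.not_dvd_ordCompl hq hx))]

def ordSwap (q : ℕ) (b : ℕ × ℕ) : ℕ × ℕ :=
  (ordCompl[q] b.1 * ordProj[q] b.2, ordProj[q] b.1 * ordCompl[q] b.2)

section

variable {q : ℕ} {b : ℕ × ℕ}

theorem ordSwap_fst_mul_snd (q : ℕ) (b : ℕ × ℕ) :
    (ordSwap q b).1 * (ordSwap q b).2 = b.1 * b.2 := by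
  conv_rhs => rw [← Nat.ordProj_mul_ordCompl_eq_self b.1 q,
    ← Nat.ordProj_mul_ordCompl_eq_self b.2 q]
  simp only [ordSwap]
  ring

theorem ordSwap_ne_zero (h₁ : b.1 ≠ 0) (h₂ : b.2 ≠ 0) :
    (ordSwap q b).1 ≠ 0 ∧ (ordSwap q b).2 ≠ 0 := by
  simp only [ordSwap]
  have := Nat.ordProj_pos b.1 q
  have := Nat.ordProj_pos b.2 q
  have := Nat.ordCompl_pos q h₁
  have := Nat.ordCompl_pos q h₂
  constructor <;> positivity

theorem ordSwap_ordSwap (hq : q.Prime) (h₁ : b.1 ≠ 0) (h₂ : b.2 ≠ 0) :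
    ordSwap q (ordSwap q b) = b := by
  obtain ⟨x, y⟩ := b
  simp only [ordSwap, Prod.mk.injEq]
  rw [mul_comm (ordProj[q] x), Nat.ordCompl_ordCompl_mul_ordProj hq h₁,
    Nat.ordCompl_ordCompl_mul_ordProj hq h₂, Nat.ordProj_ordCompl_mul_ordProj hq h₁,
    Nat.ordProj_ordCompl_mul_ordProj hq h₂, mul_comm (ordCompl[q] x)]
  exact ⟨Nat.ordProj_mul_ordCompl_eq_self x q, Nat.ordProj_mul_ordCompl_eq_self y q⟩

theorem prime_dvd_ordSwap_fst_iff (hq : q.Prime) (h₁ : b.1 ≠ 0) (h₂ : b.2 ≠ 0) :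
    q ∣ (ordSwap q b).1 ↔ q ∣ b.2 := by
  rw [ordSwap, hq.dvd_mul, or_iff_right (Nat.not_dvd_ordCompl hq h₁)]
  exact ⟨fun h => h.trans (Nat.ordProj_dvd _ _), Nat.dvd_ordProj_of_dvd h₂ hq⟩

theorem prime_dvd_ordSwap_snd_iff (hq : q.Prime) (h₁ : b.1 ≠ 0) (h₂ : b.2 ≠ 0) :
    q ∣ (ordSwap q b).2 ↔ q ∣ b.1 := by
  rw [ordSwap, hq.dvd_mul, or_iff_left (Nat.not_dvd_ordCompl hq h₂)]
  exact ⟨fun h => h.trans (Nat.ordProj_dvd _ _), Nat.dvd_ordProj_of_dvd h₁ hq⟩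

theorem odd_ordSwap_two_fst_iff (h₁ : b.1 ≠ 0) (h₂ : b.2 ≠ 0) :
    Odd (ordSwap 2 b).1 ↔ Odd b.2 := by
  simp only [Nat.odd_iff, ← Nat.two_dvd_ne_zero,
    prime_dvd_ordSwap_fst_iff Nat.prime_two h₁ h₂]

theorem odd_ordSwap_two_snd_iff (h₁ : b.1 ≠ 0) (h₂ : b.2 ≠ 0) :
    Odd (ordSwap 2 b).2 ↔ Odd b.1 := by
  simp only [Nat.odd_iff, ← Nat.two_dvd_ne_zero,
    prime_dvd_ordSwap_snd_iff Nat.prime_two h₁ h₂]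

end

theorem Nat.mod_two_mul_eq_self_iff {p i : ℕ} : i % (2 * p) = p ↔ ∃ v, Odd v ∧ i = p * v := by
  constructor
  · intro h
    refine ⟨2 * (i / (2 * p)) + 1, odd_two_mul_add_one _, ?_⟩
    conv_lhs => rw [← Nat.mod_add_div i (2 * p), h]
    ring
  · rintro ⟨v, ⟨t, rfl⟩, rfl⟩
    rcases eq_or_ne p 0 with rfl | hp
    · simp
    · rw [show p * (2 * t + 1) = p + 2 * p * t by ring, Nat.add_mul_mod_self_left,
        Nat.mod_eq_of_lt (by omega)]

open Multiset

theorem Multiset.sup_replicate {α : Type*} [SemilatticeSup α] [OrderBot α] {k : ℕ} (hk : k ≠ 0)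
    (a : α) : (replicate k a).sup = a :=
  le_antisymm (Multiset.sup_le.mpr fun _ hb => (eq_of_mem_replicate hb).le)
    (le_sup (mem_replicate.mpr ⟨hk, rfl⟩))

def IsDvdBlock (p : ℕ) (b : ℕ × ℕ) (s : Multiset ℕ) : Prop :=
  s.filter (p ∣ ·) = replicate b.1 (p * b.2)

def dvdBlock (p : ℕ) (s : Multiset ℕ) : ℕ × ℕ :=
  (card (s.filter (p ∣ ·)), (s.filter (p ∣ ·)).sup / p)

def swapDvdBlock (p : ℕ) (s : Multiset ℕ) : Multiset ℕ :=
  s.filter (¬ p ∣ ·) + replicate (ordSwap 2 (dvdBlock p s)).1 (p * (ordSwap 2 (dvdBlock p s)).2)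

section

variable {p : ℕ} {b : ℕ × ℕ} {s : Multiset ℕ}

theorem IsDvdBlock.dvdBlock_eq (h : IsDvdBlock p b s) (hp : p ≠ 0) (hb : b.1 ≠ 0) :
    dvdBlock p s = b := by
  rw [IsDvdBlock] at h
  rw [dvdBlock, h, card_replicate, sup_replicate hb, Nat.mul_div_cancel_left _ hp.bot_lt]

theorem IsDvdBlock.filter_not_add (h : IsDvdBlock p b s) :
    s.filter (¬ p ∣ ·) + replicate b.1 (p * b.2) = s := by
  rw [← h, add_comm, filter_add_not]

theorem filter_not_swapDvdBlock (p : ℕ) (s : Multiset ℕ) :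
    (swapDvdBlock p s).filter (¬ p ∣ ·) = s.filter (¬ p ∣ ·) := by
  have hrep : (replicate (ordSwap 2 (dvdBlock p s)).1 (p * (ordSwap 2 (dvdBlock p s)).2)).filter
      (¬ p ∣ ·) = 0 := filter_eq_nil.mpr fun i hi => by simp [eq_of_mem_replicate hi]
  rw [swapDvdBlock, filter_add, hrep, add_zero, filter_filter]
  simp only [and_self]

theorem isDvdBlock_swapDvdBlock (p : ℕ) (s : Multiset ℕ) :
    IsDvdBlock p (ordSwap 2 (dvdBlock p s)) (swapDvdBlock p s) := by
  have hrep : (replicate (ordSwap 2 (dvdBlock p s)).1 (p * (ordSwap 2 (dvdBlock p s)).2)).filter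
      (p ∣ ·) = replicate (ordSwap 2 (dvdBlock p s)).1 (p * (ordSwap 2 (dvdBlock p s)).2) :=
    filter_eq_self.mpr fun i hi => by simp [eq_of_mem_replicate hi]
  have hs : (s.filter (¬ p ∣ ·)).filter (p ∣ ·) = 0 := by
    rw [filter_filter]; exact filter_eq_nil.mpr fun i _ hi => hi.2 hi.1
  rw [IsDvdBlock, swapDvdBlock, filter_add, hrep, hs, zero_add]

theorem IsDvdBlock.mul_mem (h : IsDvdBlock p b s) (hb : b.1 ≠ 0) : p * b.2 ∈ s :=
  mem_of_mem_filter (h ▸ mem_replicate.mpr ⟨hb, rfl⟩)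

theorem IsDvdBlock.swap (h : IsDvdBlock p b s) (hp : p ≠ 0) (hb : b.1 ≠ 0) :
    IsDvdBlock p (ordSwap 2 b) (swapDvdBlock p s) :=
  h.dvdBlock_eq hp hb ▸ isDvdBlock_swapDvdBlock p s

theorem IsDvdBlock.swapDvdBlock_swapDvdBlock (h : IsDvdBlock p b s) (hp : p ≠ 0) (h₁ : b.1 ≠ 0)
    (h₂ : b.2 ≠ 0) : swapDvdBlock p (swapDvdBlock p s) = s := by
  have hb' := h.swap hp h₁
  calc swapDvdBlock p (swapDvdBlock p s)
      = s.filter (¬ p ∣ ·) + replicate (ordSwap 2 (ordSwap 2 b)).1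
          (p * (ordSwap 2 (ordSwap 2 b)).2) := by
        rw [swapDvdBlock, filter_not_swapDvdBlock, hb'.dvdBlock_eq hp (ordSwap_ne_zero h₁ h₂).1]
    _ = s := by rw [ordSwap_ordSwap Nat.prime_two h₁ h₂, h.filter_not_add]

theorem IsDvdBlock.sum_swapDvdBlock (h : IsDvdBlock p b s) (hp : p ≠ 0) (hb : b.1 ≠ 0) :
    (swapDvdBlock p s).sum = s.sum := by
  have hprod : (ordSwap 2 b).1 * (p * (ordSwap 2 b).2) = b.1 * (p * b.2) := by
    rw [mul_left_comm, ordSwap_fst_mul_snd, mul_left_comm]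
  conv_rhs => rw [← h.filter_not_add]
  rw [swapDvdBlock, h.dvdBlock_eq hp hb, sum_add, sum_add, sum_replicate, sum_replicate,
    smul_eq_mul, smul_eq_mul, hprod]

theorem IsDvdBlock.pos_of_mem_swapDvdBlock (h : IsDvdBlock p b s) (hs : ∀ i ∈ s, 0 < i)
    (hp : p ≠ 0) (h₁ : b.1 ≠ 0) (h₂ : b.2 ≠ 0) {i : ℕ} (hi : i ∈ swapDvdBlock p s) : 0 < i := by
  rw [swapDvdBlock, h.dvdBlock_eq hp h₁, mem_add] at hi
  rcases hi with hi | hi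
  · exact hs i (mem_of_mem_filter hi)
  · rw [eq_of_mem_replicate hi]
    exact Nat.pos_of_ne_zero (mul_ne_zero hp (ordSwap_ne_zero h₁ h₂).2)

theorem IsDvdBlock.ne_zero {n : ℕ} {lam : n.Partition} (h : IsDvdBlock p b lam.parts)
    (hb : b.1 ≠ 0) : p ≠ 0 ∧ b.2 ≠ 0 :=
  mul_ne_zero_iff.mp (lam.parts_pos (h.mul_mem hb)).ne'

theorem IsDvdBlock.eq_of_mem_of_dvd (h : IsDvdBlock p b s) {i : ℕ} (hi : i ∈ s) (hpi : p ∣ i) :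
    i = p * b.2 :=
  eq_of_mem_replicate (h ▸ mem_filter.mpr ⟨hi, hpi⟩)

theorem exists_unique_dvd_and_odd_card_iff :
    ((∃ j, p ∣ j ∧ j ∈ s ∧ ∀ i ∈ s, p ∣ i → i = j) ∧ Odd (s.filter (p ∣ ·)).card) ↔
      ∃ b : ℕ × ℕ, Odd b.1 ∧ IsDvdBlock p b s := by
  constructor
  · rintro ⟨⟨_, ⟨v, rfl⟩, -, hj⟩, hodd⟩
    exact ⟨(card (s.filter (p ∣ ·)), v), hodd,
      eq_replicate_card.mpr fun i hi => hj i (mem_of_mem_filter hi) (of_mem_filter hi)⟩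
  · rintro ⟨b, hodd, hblock⟩
    refine ⟨⟨p * b.2, dvd_mul_right _ _, hblock.mul_mem hodd.pos.ne',
      fun i hi hpi => hblock.eq_of_mem_of_dvd hi hpi⟩, ?_⟩
    rw [hblock, card_replicate]
    exact hodd

theorem forall_mod_and_exists_unique_mod_iff :
    ((∀ j ∈ s, ¬ p ∣ j ∨ j % (2 * p) = p) ∧
        ∃ j, j % (2 * p) = p ∧ j ∈ s ∧ ∀ i ∈ s, i % (2 * p) = p → i = j) ↔
      ∃ b : ℕ × ℕ, b.1 ≠ 0 ∧ Odd b.2 ∧ IsDvdBlock p b s := by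
  constructor
  · rintro ⟨hmod, j, hj, hjs, huniq⟩
    obtain ⟨v, hv, rfl⟩ := Nat.mod_two_mul_eq_self_iff.mp hj
    refine ⟨(card (s.filter (p ∣ ·)), v),
      (card_pos_iff_exists_mem.mpr ⟨_, mem_filter.mpr ⟨hjs, dvd_mul_right p v⟩⟩).ne', hv,
      eq_replicate_card.mpr fun i hi => huniq i (mem_of_mem_filter hi) ?_⟩
    exact (hmod i (mem_of_mem_filter hi)).resolve_left (not_not.mpr (of_mem_filter hi))
  · rintro ⟨b, hb, hodd, hblock⟩
    have hmod : p * b.2 % (2 * p) = p := Nat.mod_two_mul_eq_self_iff.mpr ⟨b.2, hodd, rfl⟩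
    refine ⟨fun j hj => ?_, p * b.2, hmod, hblock.mul_mem hb, fun i hi him => ?_⟩
    · by_cases hpj : p ∣ j
      · exact Or.inr (hblock.eq_of_mem_of_dvd hj hpj ▸ hmod)
      · exact Or.inl hpj
    · obtain ⟨v, -, rfl⟩ := Nat.mod_two_mul_eq_self_iff.mp him
      exact hblock.eq_of_mem_of_dvd hi (dvd_mul_right p v)

end

namespace Nat.Partition

variable {n : ℕ}

def swapDvdBlock (p : ℕ) (lam : n.Partition)
    (h : ∃ b : ℕ × ℕ, b.1 ≠ 0 ∧ IsDvdBlock p b lam.parts) : n.Partition where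
  parts := _root_.swapDvdBlock p lam.parts
  parts_pos := by
    obtain ⟨b, hb, hblock : IsDvdBlock p b lam.parts⟩ := h
    have ⟨hp, hb₂⟩ := hblock.ne_zero hb
    exact fun {_} hi => hblock.pos_of_mem_swapDvdBlock (fun _ => lam.parts_pos) hp hb hb₂ hi
  parts_sum := by
    obtain ⟨b, hb, hblock : IsDvdBlock p b lam.parts⟩ := h
    rw [hblock.sum_swapDvdBlock (hblock.ne_zero hb).1 hb, lam.parts_sum]

theorem isDvdBlock_swapDvdBlock {lam : n.Partition} (h) {b : ℕ × ℕ}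
    (hblock : IsDvdBlock p b lam.parts) (hb : b.1 ≠ 0) :
    IsDvdBlock p (ordSwap 2 b) (lam.swapDvdBlock p h).parts :=
  hblock.swap (hblock.ne_zero hb).1 hb

theorem exists_isDvdBlock_swapDvdBlock {lam : n.Partition}
    (h : ∃ b : ℕ × ℕ, b.1 ≠ 0 ∧ IsDvdBlock p b lam.parts) :
    ∃ b : ℕ × ℕ, b.1 ≠ 0 ∧ IsDvdBlock p b (lam.swapDvdBlock p h).parts := by
  obtain ⟨b, hb, hblock : IsDvdBlock p b lam.parts⟩ := h
  exact ⟨ordSwap 2 b, (ordSwap_ne_zero hb (hblock.ne_zero hb).2).1,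
    isDvdBlock_swapDvdBlock _ hblock hb⟩

theorem swapDvdBlock_swapDvdBlock (lam : n.Partition) (h) :
    (lam.swapDvdBlock p h).swapDvdBlock p (exists_isDvdBlock_swapDvdBlock h) = lam := by
  obtain ⟨b, hb, hblock : IsDvdBlock p b lam.parts⟩ := h
  have ⟨hp, hb₂⟩ := hblock.ne_zero hb
  exact Nat.Partition.ext (hblock.swapDvdBlock_swapDvdBlock hp hb hb₂)

theorem card_odd_multiplicity_eq_card_odd_quotient (p n : ℕ) :
    Nat.card {lam : n.Partition // ∃ b : ℕ × ℕ, Odd b.1 ∧ IsDvdBlock p b lam.parts} =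
      Nat.card
        {lam : n.Partition // ∃ b : ℕ × ℕ, b.1 ≠ 0 ∧ Odd b.2 ∧ IsDvdBlock p b lam.parts} := by
  have hL : ∀ {lam : n.Partition}, (∃ b : ℕ × ℕ, Odd b.1 ∧ IsDvdBlock p b lam.parts) →
      ∃ b : ℕ × ℕ, b.1 ≠ 0 ∧ IsDvdBlock p b lam.parts :=
    fun ⟨b, hb, hblock⟩ => ⟨b, hb.pos.ne', hblock⟩
  have hR : ∀ {lam : n.Partition}, (∃ b : ℕ × ℕ, b.1 ≠ 0 ∧ Odd b.2 ∧ IsDvdBlock p b lam.parts) →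
      ∃ b : ℕ × ℕ, b.1 ≠ 0 ∧ IsDvdBlock p b lam.parts :=
    fun ⟨b, hb, _, hblock⟩ => ⟨b, hb, hblock⟩
  refine Nat.card_congr
    { toFun := fun x => ⟨x.1.swapDvdBlock p (hL x.2), ?_⟩
      invFun := fun y => ⟨y.1.swapDvdBlock p (hR y.2), ?_⟩
      left_inv := fun x => Subtype.ext (swapDvdBlock_swapDvdBlock x.1 (hL x.2))
      right_inv := fun y => Subtype.ext (swapDvdBlock_swapDvdBlock y.1 (hR y.2)) }
  · obtain ⟨b, hodd, hblock : IsDvdBlock p b x.1.parts⟩ := x.2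
    have hb₂ := (hblock.ne_zero hodd.pos.ne').2
    exact ⟨ordSwap 2 b, (ordSwap_ne_zero hodd.pos.ne' hb₂).1,
      (odd_ordSwap_two_snd_iff hodd.pos.ne' hb₂).2 hodd,
      isDvdBlock_swapDvdBlock _ hblock hodd.pos.ne'⟩
  · obtain ⟨b, hb, hodd, hblock : IsDvdBlock p b y.1.parts⟩ := y.2
    have hb₂ := (hblock.ne_zero hb).2
    exact ⟨ordSwap 2 b, (odd_ordSwap_two_fst_iff hb hb₂).2 hodd,
      isDvdBlock_swapDvdBlock _ hblock hb⟩

end Nat.Partition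

theorem oPO_eq_hP_general (p : ℕ) (n : ℕ) : oPO p n = hP p n :=
  calc oPO p n = Nat.card {lam : n.Partition // ∃ b : ℕ × ℕ, Odd b.1 ∧ IsDvdBlock p b lam.parts} :=
        Nat.card_congr (Equiv.subtypeEquivRight fun _ => exists_unique_dvd_and_odd_card_iff)
    _ = Nat.card {lam : n.Partition // ∃ b : ℕ × ℕ, b.1 ≠ 0 ∧ Odd b.2 ∧ IsDvdBlock p b lam.parts} :=
        Nat.Partition.card_odd_multiplicity_eq_card_odd_quotient p n
    _ = hP p n :=
        Nat.card_congr (Equiv.subtypeEquivRight fun _ => forall_mod_and_exists_unique_mod_iff).symm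

theorem oPO_eq_hP (p : ℕ) (hp : 2 ≤ p) (n : ℕ) : oPO p n = hP p n :=
  oPO_eq_hP_general p n
end

section
/- Let p ≥ 2. For all n ≥ 0, the number of partitions of n in which the set of parts divisible by p is a singleton and the number of parts divisible by p is even equals the number of partitions of n into parts either not divisible by p, or divisible by 2p, such that the set of parts divisible by 2p is a singleton. -/
/-!
Both sides count partitions `μ + (j, …, j)` where `μ` has no part divisible by `p` and the
block consists of `t ≥ 1` copies of a single part `j`. For `o_{p,e}` the block is `2s` copies
of a multiple `j` of `p`; for `h_0` it is `s` copies of a multiple of `2p`. Trading `2s`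
copies of `j` for `s` copies of `2j` matches the two.
-/

/-- `o_{p,e}(n)`: partitions of `n` whose set of parts divisible by `p` is a singleton and
in which the number of parts divisible by `p` (counted with multiplicity) is even. -/
noncomputable def oPE (p n : ℕ) : ℕ :=
  Nat.card {lam : n.Partition //
    (∃ j, p ∣ j ∧ j ∈ lam.parts ∧ ∀ i ∈ lam.parts, p ∣ i → i = j) ∧
      Even (lam.parts.filter (fun i => p ∣ i)).card}

/-- `h_0(n,p)`: partitions of `n` into parts either not divisible by `p` or divisible by `2p`,
in which the set of parts divisible by `2p` is a singleton. -/
noncomputable def hZero (p n : ℕ) : ℕ :=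
  Nat.card {lam : n.Partition //
    (∀ j ∈ lam.parts, ¬ p ∣ j ∨ 2 * p ∣ j) ∧
      ∃ j, 2 * p ∣ j ∧ j ∈ lam.parts ∧ ∀ i ∈ lam.parts, 2 * p ∣ i → i = j}

open Multiset

def HasSingleBlock (P : ℕ → Prop) (s : Multiset ℕ) : Prop :=
  ∃ j, P j ∧ j ∈ s ∧ ∀ i ∈ s, P i → i = j

/-- Encodes the partition `rest + replicate mult part` of `n`. -/
@[ext]
structure BlockSplit (P : ℕ → Prop) (n : ℕ) where
  part : ℕ
  mult : ℕ
  rest : Multiset ℕ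
  prop_part : P part
  part_pos : 0 < part
  mult_pos : 0 < mult
  rest_pos : ∀ i ∈ rest, 0 < i
  not_prop_rest : ∀ i ∈ rest, ¬ P i
  sum_eq : rest.sum + mult * part = n

namespace BlockSplit

variable {P : ℕ → Prop} {n : ℕ}

def toPartition (d : BlockSplit P n) : n.Partition where
  parts := d.rest + replicate d.mult d.part
  parts_pos := by
    simp only [mem_add, mem_replicate]
    rintro i (hi | ⟨-, rfl⟩)
    exacts [d.rest_pos i hi, d.part_pos]
  parts_sum := by rw [sum_add, sum_replicate, smul_eq_mul, d.sum_eq]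

theorem toPartition_parts (d : BlockSplit P n) :
    d.toPartition.parts = d.rest + replicate d.mult d.part := rfl

variable [DecidablePred P]

theorem filter_toPartition_parts (d : BlockSplit P n) :
    d.toPartition.parts.filter P = replicate d.mult d.part := by
  rw [toPartition_parts, filter_add, filter_eq_nil.2 d.not_prop_rest, zero_add,
    filter_eq_self.2 fun i hi => (eq_of_mem_replicate hi).symm ▸ d.prop_part]

theorem filter_not_toPartition_parts (d : BlockSplit P n) :
    d.toPartition.parts.filter (fun i => ¬ P i) = d.rest := by
  rw [toPartition_parts, filter_add, filter_eq_self.2 d.not_prop_rest, add_eq_left,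
    filter_eq_nil]
  intro i hi
  rw [not_not, eq_of_mem_replicate hi]
  exact d.prop_part

theorem toPartition_injective : Function.Injective (toPartition : BlockSplit P n → _) := by
  intro d e h
  have hblock := filter_toPartition_parts d
  rw [h, filter_toPartition_parts] at hblock
  have hmult : e.mult = d.mult := by simpa using congrArg card hblock
  have hpart : e.part = d.part :=
    eq_of_mem_replicate (hblock ▸ mem_replicate.2 ⟨e.mult_pos.ne', rfl⟩)
  have hrest : d.rest = e.rest := by
    rw [← filter_not_toPartition_parts d, h, filter_not_toPartition_parts]
  ext <;> simp only [hpart, hmult, hrest]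

theorem hasSingleBlock_toPartition (d : BlockSplit P n) :
    HasSingleBlock P d.toPartition.parts := by
  refine ⟨d.part, d.prop_part, mem_add.2 (Or.inr (mem_replicate.2 ⟨d.mult_pos.ne', rfl⟩)), ?_⟩
  intro i hi hPi
  exact eq_of_mem_replicate (filter_toPartition_parts d ▸ mem_filter.2 ⟨hi, hPi⟩)

theorem exists_toPartition_eq {lam : n.Partition} (h : HasSingleBlock P lam.parts) :
    ∃ d : BlockSplit P n, d.toPartition = lam := by
  obtain ⟨j, hPj, hj, hunique⟩ := h
  have hblock : lam.parts.filter P = replicate (lam.parts.filter P).card j :=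
    eq_replicate_card.2 fun i hi => hunique i (mem_filter.1 hi).1 (mem_filter.1 hi).2
  have hsplit : lam.parts.filter (fun i => ¬ P i) + replicate (lam.parts.filter P).card j =
      lam.parts := by
    rw [← hblock, add_comm, filter_add_not]
  refine ⟨⟨j, (lam.parts.filter P).card, lam.parts.filter (fun i => ¬ P i), hPj,
    lam.parts_pos hj, card_pos_iff_exists_mem.2 ⟨j, mem_filter.2 ⟨hj, hPj⟩⟩,
    fun i hi => lam.parts_pos (mem_filter.1 hi).1, fun i hi => (mem_filter.1 hi).2, ?_⟩,
    Nat.Partition.ext hsplit⟩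
  have hsum := congrArg Multiset.sum hsplit
  rwa [sum_add, sum_replicate, smul_eq_mul, lam.parts_sum] at hsum

theorem card_hasSingleBlock_and (Q : n.Partition → Prop) :
    Nat.card {lam : n.Partition // HasSingleBlock P lam.parts ∧ Q lam} =
      Nat.card {d : BlockSplit P n // Q d.toPartition} := by
  refine (Nat.card_congr (Equiv.ofBijective
    (fun d => ⟨d.1.toPartition, hasSingleBlock_toPartition d.1, d.2⟩) ⟨?_, ?_⟩)).symm
  · intro d e h
    exact Subtype.ext (toPartition_injective (congrArg Subtype.val h))
  · rintro ⟨lam, hsingle, hQ⟩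
    obtain ⟨d, rfl⟩ := exists_toPartition_eq hsingle
    exact ⟨⟨d, hQ⟩, rfl⟩

end BlockSplit

open BlockSplit

theorem oPE_eq_card_blockSplit (p n : ℕ) :
    oPE p n = Nat.card {d : BlockSplit (p ∣ ·) n // Even d.mult} := by
  refine (card_hasSingleBlock_and (P := (p ∣ ·))
    fun lam => Even (lam.parts.filter (p ∣ ·)).card).trans ?_
  simp only [filter_toPartition_parts, card_replicate]

theorem hZero_eq_card_blockSplit (p n : ℕ) :
    hZero p n = Nat.card {d : BlockSplit (2 * p ∣ ·) n // ∀ i ∈ d.rest, ¬ p ∣ i} := by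
  refine (Nat.card_congr (Equiv.subtypeEquivRight fun _ => and_comm)).trans
    ((card_hasSingleBlock_and (P := (2 * p ∣ ·))
      fun lam => ∀ j ∈ lam.parts, ¬ p ∣ j ∨ 2 * p ∣ j).trans ?_)
  congr! 3 with d
  simp only [toPartition_parts, mem_add, mem_replicate]
  constructor
  · exact fun h i hi => (h i (Or.inl hi)).resolve_right (d.not_prop_rest i hi)
  · rintro h i (hi | ⟨-, rfl⟩)
    exacts [Or.inl (h i hi), Or.inr d.prop_part]

def doubleBlock (p n : ℕ) :
    {d : BlockSplit (p ∣ ·) n // Even d.mult} ≃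
      {d : BlockSplit (2 * p ∣ ·) n // ∀ i ∈ d.rest, ¬ p ∣ i} where
  toFun d :=
    ⟨{ part := 2 * d.1.part
       mult := d.1.mult / 2
       rest := d.1.rest
       prop_part := mul_dvd_mul_left 2 d.1.prop_part
       part_pos := by have := d.1.part_pos; omega
       mult_pos := by obtain ⟨k, hk⟩ := d.2; have := d.1.mult_pos; omega
       rest_pos := d.1.rest_pos
       not_prop_rest := fun i hi h => d.1.not_prop_rest i hi (dvd_of_mul_left_dvd h)
       sum_eq := by
         rw [← mul_assoc, Nat.div_mul_cancel (even_iff_two_dvd.1 d.2), d.1.sum_eq] },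
      d.1.not_prop_rest⟩
  invFun d :=
    ⟨{ part := d.1.part / 2
       mult := 2 * d.1.mult
       rest := d.1.rest
       prop_part := Nat.dvd_div_of_mul_dvd d.1.prop_part
       part_pos := by
         obtain ⟨k, hk⟩ := dvd_of_mul_right_dvd d.1.prop_part; have := d.1.part_pos; omega
       mult_pos := by have := d.1.mult_pos; omega
       rest_pos := d.1.rest_pos
       not_prop_rest := d.2
       sum_eq := by
         rw [mul_comm 2 d.1.mult, mul_assoc,
           Nat.mul_div_cancel' (dvd_of_mul_right_dvd d.1.prop_part), d.1.sum_eq] },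
      even_two_mul _⟩
  left_inv d := by
    ext <;> simp [Nat.two_mul_div_two_of_even d.2]
  right_inv d := by
    ext <;> simp [Nat.mul_div_cancel' (dvd_of_mul_right_dvd d.1.prop_part)]

theorem oPE_eq_hZero_general (p : ℕ) (n : ℕ) : oPE p n = hZero p n := by
  rw [oPE_eq_card_blockSplit, hZero_eq_card_blockSplit, Nat.card_congr (doubleBlock p n)]

theorem oPE_eq_hZero (p : ℕ) (hp : 2 ≤ p) (n : ℕ) : oPE p n = hZero p n :=
  oPE_eq_hZero_general p n
end

section
/- For all n ≥ 1, the number of partitions of n in which exactly one even part value is repeated (all other even part values are distinct) and odd parts are unrestricted equals the number of partitions of n in which the set of parts congruent to 0 modulo 4 is a singleton. -/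
/-
Split the multiplicity `c` of each even part `k` of a partition as `c % 2 + 2 * (c / 2)`. Replacing
each of the `c / 2` pairs `k, k` by one part `2 * k`, and applying Glaisher's bijection
(`2 ^ (i + 1) * o`, `o` odd, becomes `2 ^ i` parts `2 * o`; inversely, binary expansion of
multiplicities) to the remaining partition, whose even parts are distinct, gives a bijection of the
partitions of `n` onto themselves. Glaisher's image has no part divisible by `4`, so the parts
divisible by `4` of the image are the `2 * k` with `k` a repeated even part: exactly one even value
is repeated iff exactly one multiple of `4` occurs.
-/

/-- `d_e(n)`: partitions of `n` in which exactly one even part value is repeated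
(all other even part values appear exactly once) and odd parts are unrestricted. -/
noncomputable def dE (n : ℕ) : ℕ :=
  Nat.card {lam : n.Partition //
    ∃ j, Even j ∧ 2 ≤ lam.parts.count j ∧
      ∀ i, Even i → i ≠ j → lam.parts.count i ≤ 1}

/-- `f_0(n)`: partitions of `n` in which the set of parts congruent to `0` modulo `4`
is a singleton. -/
noncomputable def fZero (n : ℕ) : ℕ :=
  Nat.card {lam : n.Partition //
    ∃ j, 4 ∣ j ∧ j ∈ lam.parts ∧ ∀ i ∈ lam.parts, 4 ∣ i → i = j}

open Multiset

namespace Nat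

lemma eq_zero_or_odd_or_eq_two_pow_succ_mul (y : ℕ) :
    y = 0 ∨ Odd y ∨ ∃ i o, Odd o ∧ y = 2 ^ (i + 1) * o := by
  rcases eq_or_ne y 0 with rfl | hy
  · exact .inl rfl
  obtain ⟨a, o, ho, rfl⟩ := exists_eq_two_pow_mul_odd hy
  rcases a with _ | i
  · simpa using .inr (.inl ho)
  · exact .inr (.inr ⟨i, o, ho, rfl⟩)

lemma two_pow_mul_odd_inj {a b o o' : ℕ} (ho : Odd o) (ho' : Odd o')
    (h : 2 ^ a * o = 2 ^ b * o') : a = b ∧ o = o' := by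
  induction a generalizing b with
  | zero =>
    rcases b with _ | b
    · simpa using h
    · simp only [pow_zero, one_mul] at h
      exact absurd (by simp [h, parity_simps] : Even o) (not_even_iff_odd.mpr ho)
  | succ a ih =>
    rcases b with _ | b
    · simp only [pow_zero, one_mul] at h
      exact absurd (by simp [← h, parity_simps] : Even o') (not_even_iff_odd.mpr ho')
    · obtain ⟨rfl, rfl⟩ := ih (b := b) (by rw [pow_succ, pow_succ] at h; linarith)
      exact ⟨rfl, rfl⟩

lemma factorization_two_pow_mul_odd {a o : ℕ} (ho : Odd o) : (2 ^ a * o).factorization 2 = a := by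
  rw [factorization_mul (by positivity) ho.pos.ne', Finsupp.add_apply,
    Prime.factorization_pow prime_two, Finsupp.single_eq_same,
    factorization_eq_zero_of_not_dvd (by simpa [← even_iff_two_dvd] using ho), add_zero]

lemma Partition.zero_notMem_parts {n : ℕ} (p : n.Partition) : 0 ∉ p.parts :=
  fun h => (p.parts_pos h).ne' rfl

end Nat

namespace Glaisher

lemma two_pow_succ_mul_injective {o : ℕ} (ho : Odd o) :
    Function.Injective fun i => 2 ^ (i + 1) * o :=
  fun _ _ h => by simpa using (Nat.two_pow_mul_odd_inj ho ho h).1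

/-- The part `2 ^ (i + 1) * o`, `o` odd, becomes `2 ^ i` parts `2 * o`. Thanks to the truncated
subtraction the same formula keeps an odd part as it is. -/
def split (k : ℕ) : Multiset ℕ :=
  replicate (2 ^ (k.factorization 2 - 1)) (k / 2 ^ (k.factorization 2 - 1))

lemma split_of_odd {o : ℕ} (ho : Odd o) : split o = {o} := by
  have h := Nat.factorization_two_pow_mul_odd (a := 0) ho
  rw [pow_zero, one_mul] at h
  simp [split, h, replicate_one]

lemma split_two_pow_succ_mul (i : ℕ) {o : ℕ} (ho : Odd o) :
    split (2 ^ (i + 1) * o) = replicate (2 ^ i) (2 * o) := by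
  rw [split, Nat.factorization_two_pow_mul_odd ho, Nat.add_sub_cancel, pow_succ, mul_assoc,
    Nat.mul_div_cancel_left _ (by positivity)]

lemma sum_split (k : ℕ) : (split k).sum = k := by
  rw [split, sum_replicate, smul_eq_mul,
    Nat.mul_div_cancel' ((pow_dvd_pow 2 (Nat.sub_le _ 1)).trans (Nat.ordProj_dvd k 2))]

lemma mem_split {k y : ℕ} (hk : k ≠ 0) (hy : y ∈ split k) : y ≠ 0 ∧ ¬ 4 ∣ y := by
  rcases Nat.eq_zero_or_odd_or_eq_two_pow_succ_mul k with rfl | hodd | ⟨i, o, ho, rfl⟩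
  · exact absurd rfl hk
  · rw [split_of_odd hodd, mem_singleton] at hy
    subst hy
    exact ⟨hk, fun h4 => Nat.not_even_iff_odd.mpr hodd (even_iff_two_dvd.mpr
      ((by norm_num : 2 ∣ 4).trans h4))⟩
  · rw [split_two_pow_succ_mul i ho] at hy
    obtain ⟨r, rfl⟩ := ho
    rw [eq_of_mem_replicate hy]
    omega

def splitParts (s : Multiset ℕ) : Multiset ℕ := s.bind split

lemma sum_splitParts (s : Multiset ℕ) : (splitParts s).sum = s.sum := by
  simp [splitParts, sum_bind, sum_split]

variable {s : Multiset ℕ}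

lemma zero_notMem_splitParts (hs : 0 ∉ s) : 0 ∉ splitParts s := by
  simp only [splitParts, mem_bind, not_exists, not_and]
  exact fun k hk h0 => (mem_split (ne_of_mem_of_not_mem hk hs) h0).1 rfl

lemma not_four_dvd_of_mem_splitParts (hs : 0 ∉ s) {y : ℕ} (hy : y ∈ splitParts s) :
    ¬ 4 ∣ y := by
  obtain ⟨k, hk, hy⟩ := mem_bind.mp hy
  exact (mem_split (ne_of_mem_of_not_mem hk hs) hy).2

lemma filter_odd_splitParts (hs : 0 ∉ s) : (splitParts s).filter Odd = s.filter Odd := by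
  conv_rhs => rw [← map_id s, ← bind_singleton, filter_bind]
  rw [splitParts, filter_bind]
  refine bind_congr fun k hk => ?_
  rcases Nat.eq_zero_or_odd_or_eq_two_pow_succ_mul k with rfl | hodd | ⟨i, o, ho, rfl⟩
  · exact absurd hk hs
  · rw [split_of_odd hodd, id]
  · rw [split_two_pow_succ_mul i ho, filter_eq_nil.mpr, filter_eq_nil.mpr]
    · simp [parity_simps]
    · intro y hy
      simp [eq_of_mem_replicate hy, parity_simps]

lemma count_splitParts_of_odd (hs : 0 ∉ s) {y : ℕ} (hy : Odd y) :
    count y (splitParts s) = count y s := by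
  rw [← count_filter_of_pos hy, filter_odd_splitParts hs, count_filter_of_pos hy]

lemma count_splitParts_two_mul (hs : 0 ∉ s) (hds : ∀ k, Even k → count k s ≤ 1) {o : ℕ}
    (ho : Odd o) {A : Finset ℕ} (hA : ∀ i, 2 ^ (i + 1) * o ∈ s ↔ i ∈ A) :
    count (2 * o) (splitParts s) = ∑ i ∈ A, 2 ^ i := by
  have hsub : A.image (fun i => 2 ^ (i + 1) * o) ⊆ s.toFinset := by
    simp [Finset.image_subset_iff, hA]
  have hzero : ∀ k ∈ s.toFinset, k ∉ A.image (fun i => 2 ^ (i + 1) * o) →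
      count k s • count (2 * o) (split k) = 0 := by
    intro k hk hkA
    rw [mem_toFinset] at hk
    rcases Nat.eq_zero_or_odd_or_eq_two_pow_succ_mul k with rfl | hodd | ⟨i, o', ho', rfl⟩
    · exact absurd hk hs
    · rw [split_of_odd hodd, count_singleton, if_neg, smul_zero]
      rintro rfl
      exact Nat.not_even_iff_odd.mpr hodd (even_two_mul o)
    · rw [split_two_pow_succ_mul i ho', count_replicate, if_neg, smul_zero]
      rintro h
      obtain rfl : o' = o := by omega
      exact hkA (Finset.mem_image_of_mem _ ((hA i).mp hk))
  rw [splitParts, count_bind, Finset.sum_multiset_map_count, ← Finset.sum_subset hsub hzero,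
    Finset.sum_image (two_pow_succ_mul_injective ho).injOn]
  refine Finset.sum_congr rfl fun i hi => ?_
  have hmem := (hA i).mpr hi
  rw [split_two_pow_succ_mul i ho, count_replicate_self,
    le_antisymm (hds _ (by simp [parity_simps])) (one_le_count_iff_mem.mpr hmem), one_smul]

def binaryCopies (x c : ℕ) : Multiset ℕ := ↑(c.bitIndices.map fun i => 2 ^ i * x)

lemma sum_binaryCopies (x c : ℕ) : (binaryCopies x c).sum = c * x := by
  simp [binaryCopies, List.sum_map_mul_right]

def mergeParts (t : Multiset ℕ) : Multiset ℕ :=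
  t.filter Odd + ∑ x ∈ (t.filter Even).toFinset, binaryCopies x (t.count x)

lemma sum_mergeParts (t : Multiset ℕ) : (mergeParts t).sum = t.sum := by
  have heven : (t.filter Even).sum = ∑ x ∈ (t.filter Even).toFinset, t.count x * x := by
    rw [Finset.sum_multiset_count]
    refine Finset.sum_congr rfl fun x hx => ?_
    rw [count_filter_of_pos (of_mem_filter (mem_toFinset.mp hx)), smul_eq_mul]
  rw [mergeParts, sum_add, Multiset.sum_sum]
  simp_rw [sum_binaryCopies]
  rw [← heven]
  conv_rhs => rw [← filter_add_not Odd t, sum_add]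
  simp_rw [Nat.not_odd_iff_even]

variable {t : Multiset ℕ}

lemma zero_notMem_mergeParts (ht : 0 ∉ t) : 0 ∉ mergeParts t := by
  rw [mergeParts, mem_add, Multiset.mem_sum]
  rintro (h0 | ⟨x, hx, h0⟩)
  · exact ht (mem_of_mem_filter h0)
  · obtain ⟨i, -, hi⟩ := List.mem_map.mp (mem_coe.mp h0)
    obtain rfl := (mul_eq_zero.mp hi).resolve_left (by positivity)
    exact ht (mem_of_mem_filter (mem_toFinset.mp hx))

lemma filter_odd_mergeParts : (mergeParts t).filter Odd = t.filter Odd := by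
  have hbin : (∑ x ∈ (t.filter Even).toFinset, binaryCopies x (t.count x)).filter Odd = 0 := by
    refine filter_eq_nil.mpr fun y hy => ?_
    obtain ⟨x, hx, hy⟩ := Multiset.mem_sum.mp hy
    obtain ⟨i, -, rfl⟩ := List.mem_map.mp (mem_coe.mp hy)
    exact Nat.not_odd_iff_even.mpr ((of_mem_filter (mem_toFinset.mp hx)).mul_left _)
  rw [mergeParts, filter_add, hbin, add_zero, filter_eq_self.mpr fun _ h => of_mem_filter h]

lemma count_mergeParts_of_odd {y : ℕ} (hy : Odd y) : count y (mergeParts t) = count y t := by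
  rw [← count_filter_of_pos hy, filter_odd_mergeParts, count_filter_of_pos hy]

lemma count_mergeParts_two_pow_succ_mul (ht4 : ∀ x ∈ t, ¬ 4 ∣ x) (i : ℕ) {o : ℕ}
    (ho : Odd o) : count (2 ^ (i + 1) * o) (mergeParts t) =
      if i ∈ (t.count (2 * o)).bitIndices then 1 else 0 := by
  have hy : 2 ^ (i + 1) * o = 2 ^ i * (2 * o) := by ring
  rw [mergeParts, count_add, count_filter_of_neg (by simp [parity_simps]), zero_add,
    count_sum', Finset.sum_eq_single (2 * o)]
  · rw [binaryCopies, coe_count, hy, List.count_map_of_injective _ _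
      (fun a b h => Nat.pow_right_injective le_rfl (Nat.eq_of_mul_eq_mul_right
        (Nat.mul_pos two_pos ho.pos) h)), List.Nodup.count Nat.bitIndices_nodup]
  · intro x hx hxo
    obtain ⟨hxt, r, rfl⟩ := mem_filter.mp (mem_toFinset.mp hx)
    have hr : Odd r := by have := ht4 _ hxt; rw [Nat.odd_iff]; omega
    refine count_eq_zero.mpr fun hmem => hxo ?_
    obtain ⟨j, -, hj⟩ := List.mem_map.mp (mem_coe.mp hmem)
    have hj' : 2 ^ (j + 1) * r = 2 ^ (i + 1) * o := by rw [← hj]; ring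
    rw [(Nat.two_pow_mul_odd_inj hr ho hj').2]
    ring
  · intro h
    rw [count_eq_zero.mpr fun hmem => h (mem_toFinset.mpr (mem_filter.mpr
      ⟨hmem, even_two_mul o⟩))]
    simp [binaryCopies]

lemma count_mergeParts_le_one (ht0 : 0 ∉ t) (ht4 : ∀ x ∈ t, ¬ 4 ∣ x) {k : ℕ}
    (hk : Even k) : count k (mergeParts t) ≤ 1 := by
  rcases Nat.eq_zero_or_odd_or_eq_two_pow_succ_mul k with rfl | hodd | ⟨i, o, ho, rfl⟩
  · rw [count_eq_zero.mpr (zero_notMem_mergeParts ht0)]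
    exact zero_le_one
  · exact absurd hodd (Nat.not_odd_iff_even.mpr hk)
  · rw [count_mergeParts_two_pow_succ_mul ht4 i ho]
    split_ifs <;> omega

theorem splitParts_mergeParts (ht0 : 0 ∉ t) (ht4 : ∀ x ∈ t, ¬ 4 ∣ x) :
    splitParts (mergeParts t) = t := by
  ext y
  rcases Nat.eq_zero_or_odd_or_eq_two_pow_succ_mul y with rfl | hy | ⟨_ | i, o, ho, rfl⟩
  · rw [count_eq_zero.mpr (zero_notMem_splitParts (zero_notMem_mergeParts ht0)),
      count_eq_zero.mpr ht0]
  · rw [count_splitParts_of_odd (zero_notMem_mergeParts ht0) hy, count_mergeParts_of_odd hy]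
  · have hA : ∀ i,
        2 ^ (i + 1) * o ∈ mergeParts t ↔ i ∈ (t.count (2 * o)).bitIndices.toFinset := by
      intro i
      rw [← count_pos, count_mergeParts_two_pow_succ_mul ht4 i ho, List.mem_toFinset]
      split_ifs <;> simp [*]
    rw [zero_add, pow_one, count_splitParts_two_mul (zero_notMem_mergeParts ht0)
      (fun _ => count_mergeParts_le_one ht0 ht4) ho hA, Finset.sum_toFinset_bitIndices_two_pow]
  · have h4 : 4 ∣ 2 ^ (i + 1 + 1) * o := ⟨2 ^ i * o, by ring⟩
    rw [count_eq_zero.mpr fun h => not_four_dvd_of_mem_splitParts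
        (zero_notMem_mergeParts ht0) h h4, count_eq_zero.mpr fun h => ht4 _ h h4]

theorem mergeParts_splitParts (hs0 : 0 ∉ s) (hds : ∀ k, Even k → count k s ≤ 1) :
    mergeParts (splitParts s) = s := by
  ext y
  rcases Nat.eq_zero_or_odd_or_eq_two_pow_succ_mul y with rfl | hy | ⟨i, o, ho, rfl⟩
  · rw [count_eq_zero.mpr (zero_notMem_mergeParts (zero_notMem_splitParts hs0)),
      count_eq_zero.mpr hs0]
  · rw [count_mergeParts_of_odd hy, count_splitParts_of_odd hs0 hy]
  · let A := s.toFinset.preimage _ (two_pow_succ_mul_injective ho).injOn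
    have hA : ∀ i, 2 ^ (i + 1) * o ∈ s ↔ i ∈ A := by simp [A]
    have hbit : i ∈ (∑ i ∈ A, 2 ^ i).bitIndices ↔ 2 ^ (i + 1) * o ∈ s := by
      rw [← List.mem_toFinset, Finset.toFinset_bitIndices_sum_two_pow, hA]
    rw [count_mergeParts_two_pow_succ_mul (fun _ => not_four_dvd_of_mem_splitParts hs0) i ho,
      count_splitParts_two_mul hs0 hds ho hA]
    simp only [hbit]
    split_ifs with h
    · exact (le_antisymm (hds _ (by simp [parity_simps])) (one_le_count_iff_mem.mpr h)).symm
    · exact (count_eq_zero.mpr h).symm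

end Glaisher

namespace RepeatedEven

/-- Each even part `k` of multiplicity `c` occurs `c / 2` times. -/
noncomputable def evenPairs (s : Multiset ℕ) : Multiset ℕ :=
  Finsupp.toMultiset ((toFinsupp (s.filter Even)).mapRange (· / 2) (Nat.zero_div 2))

noncomputable def unpaired (s : Multiset ℕ) : Multiset ℕ := s - 2 • evenPairs s

variable {s t u h : Multiset ℕ}

lemma count_evenPairs (s : Multiset ℕ) (k : ℕ) :
    count k (evenPairs s) = if Even k then count k s / 2 else 0 := by
  simp only [evenPairs, Finsupp.count_toMultiset, Finsupp.mapRange_apply, toFinsupp_apply,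
    count_filter]
  split_ifs <;> rfl

lemma mem_evenPairs {k : ℕ} : k ∈ evenPairs s ↔ Even k ∧ 2 ≤ count k s := by
  rw [← count_pos, count_evenPairs]
  split_ifs with hk <;> simp [hk]

lemma unpaired_add_two_nsmul_evenPairs (s : Multiset ℕ) : unpaired s + 2 • evenPairs s = s :=
  Multiset.sub_add_cancel (le_iff_count.mpr fun k => by
    rw [count_nsmul, count_evenPairs]
    split_ifs <;> omega)

lemma count_unpaired_le_one {k : ℕ} (hk : Even k) : count k (unpaired s) ≤ 1 := by
  rw [unpaired, count_sub, count_nsmul, count_evenPairs, if_pos hk]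
  omega

lemma evenPairs_add_two_nsmul (hu : ∀ k, Even k → count k u ≤ 1) (hh : ∀ k ∈ h, Even k) :
    evenPairs (u + 2 • h) = h := by
  ext k
  rw [count_evenPairs, count_add, count_nsmul]
  split_ifs with hk
  · have := hu k hk
    omega
  · exact (count_eq_zero.mpr fun hkh => hk (hh k hkh)).symm

lemma unpaired_add_two_nsmul (hu : ∀ k, Even k → count k u ≤ 1) (hh : ∀ k ∈ h, Even k) :
    unpaired (u + 2 • h) = u := by
  rw [unpaired, evenPairs_add_two_nsmul hu hh, add_tsub_cancel_right]

open Glaisher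

noncomputable def pairSplit (s : Multiset ℕ) : Multiset ℕ :=
  splitParts (unpaired s) + (evenPairs s).map (2 * ·)

def unpairMerge (t : Multiset ℕ) : Multiset ℕ :=
  mergeParts (t.filter (¬ 4 ∣ ·)) + 2 • (t.filter (4 ∣ ·)).map (· / 2)

lemma sum_pairSplit (s : Multiset ℕ) : (pairSplit s).sum = s.sum := by
  conv_rhs => rw [← unpaired_add_two_nsmul_evenPairs s]
  rw [pairSplit, sum_add, sum_splitParts, sum_map_mul_left, map_id', sum_add, sum_nsmul,
    smul_eq_mul]

lemma sum_unpairMerge (t : Multiset ℕ) : (unpairMerge t).sum = t.sum := by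
  have hhalf : 2 * ((t.filter (4 ∣ ·)).map (· / 2)).sum = (t.filter (4 ∣ ·)).sum := by
    rw [← sum_map_mul_left]
    conv_rhs => rw [← map_id (t.filter (4 ∣ ·))]
    refine congrArg sum (map_congr rfl fun x hx => ?_)
    have := of_mem_filter hx
    simp only [id_eq]
    omega
  rw [unpairMerge, sum_add, sum_mergeParts, sum_nsmul, smul_eq_mul, hhalf, ← sum_add, add_comm,
    filter_add_not]

lemma zero_notMem_unpaired (hs : 0 ∉ s) : 0 ∉ unpaired s :=
  fun h0 => hs (mem_of_le tsub_le_self h0)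

lemma zero_notMem_pairSplit (hs : 0 ∉ s) : 0 ∉ pairSplit s := by
  rw [pairSplit, mem_add, mem_map]
  rintro (h0 | ⟨k, hk, hk0⟩)
  · exact zero_notMem_splitParts (zero_notMem_unpaired hs) h0
  · obtain rfl : k = 0 := by omega
    exact hs (count_pos.mp (by have := (mem_evenPairs.mp hk).2; omega))

lemma zero_notMem_unpairMerge (ht : 0 ∉ t) : 0 ∉ unpairMerge t := by
  rw [unpairMerge, mem_add, mem_nsmul_of_ne_zero two_ne_zero, mem_map]
  rintro (h0 | ⟨x, hx, hx0⟩)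
  · exact zero_notMem_mergeParts (fun h => ht (mem_of_mem_filter h)) h0
  · obtain ⟨hxt, hx4⟩ := mem_filter.mp hx
    obtain rfl : x = 0 := by omega
    exact ht hxt

lemma filter_four_dvd_pairSplit (hs : 0 ∉ s) :
    (pairSplit s).filter (4 ∣ ·) = (evenPairs s).map (2 * ·) := by
  rw [pairSplit, filter_add, filter_eq_nil.mpr fun y hy =>
    not_four_dvd_of_mem_splitParts (zero_notMem_unpaired hs) hy, zero_add, filter_eq_self]
  intro y hy
  obtain ⟨k, hk, rfl⟩ := mem_map.mp hy
  obtain ⟨r, rfl⟩ := (mem_evenPairs.mp hk).1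
  exact ⟨r, by ring⟩

lemma filter_not_four_dvd_pairSplit (hs : 0 ∉ s) :
    (pairSplit s).filter (¬ 4 ∣ ·) = splitParts (unpaired s) := by
  rw [pairSplit, filter_add, filter_eq_self.mpr fun y hy =>
    not_four_dvd_of_mem_splitParts (zero_notMem_unpaired hs) hy, filter_eq_nil.mpr, add_zero]
  intro y hy
  obtain ⟨k, hk, rfl⟩ := mem_map.mp hy
  obtain ⟨r, rfl⟩ := (mem_evenPairs.mp hk).1
  exact not_not.mpr ⟨r, by ring⟩

theorem unpairMerge_pairSplit (hs : 0 ∉ s) : unpairMerge (pairSplit s) = s := by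
  rw [unpairMerge, filter_not_four_dvd_pairSplit hs, filter_four_dvd_pairSplit hs,
    mergeParts_splitParts (zero_notMem_unpaired hs) (fun _ => count_unpaired_le_one), map_map]
  conv_rhs => rw [← unpaired_add_two_nsmul_evenPairs s]
  congr 2
  exact (map_congr rfl fun k _ => by simp).trans (map_id _)

theorem pairSplit_unpairMerge (ht : 0 ∉ t) : pairSplit (unpairMerge t) = t := by
  have ht0 : 0 ∉ t.filter (¬ 4 ∣ ·) := fun h => ht (mem_of_mem_filter h)
  have ht4 : ∀ x ∈ t.filter (¬ 4 ∣ ·), ¬ 4 ∣ x := fun _ h => (mem_filter.mp h).2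
  have hu := fun k (hk : Even k) => count_mergeParts_le_one ht0 ht4 hk
  have hh : ∀ k ∈ (t.filter (4 ∣ ·)).map (· / 2), Even k := by
    intro k hk
    obtain ⟨x, hx, rfl⟩ := mem_map.mp hk
    obtain ⟨r, rfl⟩ := of_mem_filter hx
    exact ⟨r, by omega⟩
  rw [pairSplit, unpairMerge, unpaired_add_two_nsmul hu hh, evenPairs_add_two_nsmul hu hh,
    splitParts_mergeParts ht0 ht4, map_map]
  conv_rhs => rw [← filter_add_not (4 ∣ ·) t, add_comm]
  congr 1
  refine (map_congr rfl fun x hx => ?_).trans (map_id _)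
  have := of_mem_filter hx
  simp only [Function.comp_apply, id]
  omega

lemma exists_unique_repeated_even_iff (hs : 0 ∉ s) :
    (∃ j, Even j ∧ 2 ≤ s.count j ∧ ∀ i, Even i → i ≠ j → s.count i ≤ 1) ↔
      ∃ j, 4 ∣ j ∧ j ∈ pairSplit s ∧ ∀ i ∈ pairSplit s, 4 ∣ i → i = j := by
  have key : ∀ y, 4 ∣ y ∧ y ∈ pairSplit s ↔ ∃ k ∈ evenPairs s, 2 * k = y := by
    intro y
    rw [← mem_map, ← filter_four_dvd_pairSplit hs, mem_filter, and_comm]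
  constructor
  · rintro ⟨j, hj, hjs, hrest⟩
    obtain ⟨h4, hmem⟩ := (key (2 * j)).mpr ⟨j, mem_evenPairs.mpr ⟨hj, hjs⟩, rfl⟩
    refine ⟨2 * j, h4, hmem, fun i hi hi4 => ?_⟩
    obtain ⟨k, hk, rfl⟩ := (key i).mp ⟨hi4, hi⟩
    obtain ⟨hk, hks⟩ := mem_evenPairs.mp hk
    by_contra hne
    exact absurd (hrest k hk fun h => hne (h ▸ rfl)) (by omega)
  · rintro ⟨y, hy4, hy, hrest⟩
    obtain ⟨j, hj, rfl⟩ := (key y).mp ⟨hy4, hy⟩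
    obtain ⟨hj, hjs⟩ := mem_evenPairs.mp hj
    refine ⟨j, hj, hjs, fun i hi hne => not_lt.mp fun hlt => hne ?_⟩
    obtain ⟨h4, hmem⟩ := (key (2 * i)).mpr ⟨i, mem_evenPairs.mpr ⟨hi, hlt⟩, rfl⟩
    have := hrest _ hmem h4
    omega

noncomputable def pairSplitEquiv (n : ℕ) : n.Partition ≃ n.Partition where
  toFun p := ⟨pairSplit p.parts,
    fun h => Nat.pos_of_ne_zero (ne_of_mem_of_not_mem h
      (zero_notMem_pairSplit p.zero_notMem_parts)),
    (sum_pairSplit _).trans p.parts_sum⟩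
  invFun p := ⟨unpairMerge p.parts,
    fun h => Nat.pos_of_ne_zero (ne_of_mem_of_not_mem h
      (zero_notMem_unpairMerge p.zero_notMem_parts)),
    (sum_unpairMerge _).trans p.parts_sum⟩
  left_inv p := Nat.Partition.ext (unpairMerge_pairSplit p.zero_notMem_parts)
  right_inv p := Nat.Partition.ext (pairSplit_unpairMerge p.zero_notMem_parts)

end RepeatedEven

theorem dE_eq_fZero_general (n : ℕ) : dE n = fZero n :=
  Nat.card_congr ((RepeatedEven.pairSplitEquiv n).subtypeEquiv fun p =>
    RepeatedEven.exists_unique_repeated_even_iff p.zero_notMem_parts)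

theorem dE_eq_fZero (n : ℕ) (hn : 1 ≤ n) : dE n = fZero n :=
  dE_eq_fZero_general n
end

section
/- For all n ≥ 1, the number of partitions of n in which exactly one odd part value is repeated (all other odd part values are distinct) and even parts are unrestricted equals the number of partitions of n in which the set of parts congruent to 2 modulo 4 is a singleton. -/
/-- `d_o(n)`: partitions of `n` in which exactly one odd part value is repeated
(all other odd part values appear exactly once) and even parts are unrestricted. -/
noncomputable def dO (n : ℕ) : ℕ :=
  Nat.card {lam : n.Partition //
    ∃ j, Odd j ∧ 2 ≤ lam.parts.count j ∧
      ∀ i, Odd i → i ≠ j → lam.parts.count i ≤ 1}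

/-- `f_2(n)`: partitions of `n` in which the set of parts congruent to `2` modulo `4`
is a singleton. -/
noncomputable def fTwo (n : ℕ) : ℕ :=
  Nat.card {lam : n.Partition //
    ∃ j, j % 4 = 2 ∧ j ∈ lam.parts ∧ ∀ i ∈ lam.parts, i % 4 = 2 → i = j}

/-!
Merging every pair of equal odd parts `w, w` into `2 w` and splitting every part `2 w ≡ 2 (mod 4)`
into `w, w` is a sum-preserving involution of partitions: on multiplicities it sends, for odd `a`,
`m a ↦ m a % 2 + 2 m (2 a)` and `m (2 a) ↦ m a / 2`, and fixes the multiplicities of multiples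
of `4`. The parts `≡ 2 (mod 4)` of the image are the `2 w` with `w` odd and `m w ≥ 2`, so the image
has exactly one such part value iff exactly one odd part value is repeated.
-/

open Multiset

lemma Multiset.sum_toFinset_ite_eq {α β : Type*} [DecidableEq α] [AddCommMonoid β]
    (s : Multiset α) (b : α) (g : ℕ → β) (hg : g 0 = 0) :
    ∑ w ∈ s.toFinset, (if w = b then g (s.count w) else 0) = g (s.count b) := by
  rw [Finset.sum_ite_eq']
  split_ifs with hb
  · rfl
  · rw [count_eq_zero.2 (fun h => hb (mem_toFinset.2 h)), hg]

lemma Multiset.sum_sum_toFinset_count {α : Type*} [DecidableEq α] [AddCommMonoid α]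
    {f : α → ℕ → Multiset α} (hf : ∀ w c, (f w c).sum = c • w) (s : Multiset α) :
    (∑ w ∈ s.toFinset, f w (s.count w)).sum = s.sum := by
  rw [Multiset.sum_sum, Finset.sum_multiset_count]
  exact Finset.sum_congr rfl fun w _ => hf w _

/-- The image of `c` copies of the part `w`. -/
def mergeSplitBlock (w c : ℕ) : Multiset ℕ :=
  if w % 2 = 1 then replicate (c % 2) w + replicate (c / 2) (2 * w)
  else if w % 4 = 2 then replicate (2 * c) (w / 2)
  else replicate c w

def mergeSplit (s : Multiset ℕ) : Multiset ℕ :=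
  ∑ w ∈ s.toFinset, mergeSplitBlock w (s.count w)

lemma sum_mergeSplitBlock (w c : ℕ) : (mergeSplitBlock w c).sum = c • w := by
  unfold mergeSplitBlock
  split_ifs
  · simp only [sum_add, sum_replicate, smul_eq_mul]
    nth_rewrite 3 [← Nat.mod_add_div c 2]
    ring
  · have hw : 2 * (w / 2) = w := by omega
    simp only [sum_replicate, smul_eq_mul]
    rw [mul_comm 2 c, mul_assoc, hw]
  · exact sum_replicate c w

lemma count_mergeSplitBlock (a w c : ℕ) :
    (mergeSplitBlock w c).count a =
      if a % 2 = 1 then (if w = a then c % 2 else 0) + (if w = 2 * a then 2 * c else 0)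
      else if a % 4 = 2 then (if w = a / 2 then c / 2 else 0)
      else if w = a then c else 0 := by
  unfold mergeSplitBlock
  split_ifs <;> simp only [count_add, count_replicate] <;> split_ifs <;> omega

lemma count_mergeSplit (a : ℕ) (s : Multiset ℕ) :
    (mergeSplit s).count a =
      if a % 2 = 1 then s.count a % 2 + 2 * s.count (2 * a)
      else if a % 4 = 2 then s.count (a / 2) / 2
      else s.count a := by
  simp only [mergeSplit, count_sum', count_mergeSplitBlock]
  split_ifs
  · rw [Finset.sum_add_distrib, sum_toFinset_ite_eq s a (· % 2) rfl,
      sum_toFinset_ite_eq s (2 * a) (2 * ·) rfl]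
  · exact sum_toFinset_ite_eq s (a / 2) (· / 2) rfl
  · exact sum_toFinset_ite_eq s a id rfl

lemma sum_mergeSplit (s : Multiset ℕ) : (mergeSplit s).sum = s.sum :=
  sum_sum_toFinset_count sum_mergeSplitBlock s

lemma mergeSplit_involutive : Function.Involutive mergeSplit := by
  intro s
  ext a
  by_cases hodd : a % 2 = 1
  · rw [count_mergeSplit, if_pos hodd, count_mergeSplit, if_pos hodd, count_mergeSplit,
      if_neg (by omega : ¬ 2 * a % 2 = 1), if_pos (by omega : 2 * a % 4 = 2),
      Nat.mul_div_cancel_left a two_pos]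
    omega
  by_cases htwo : a % 4 = 2
  · have ha : 2 * (a / 2) = a := by omega
    rw [count_mergeSplit, if_neg hodd, if_pos htwo, count_mergeSplit,
      if_pos (by omega : a / 2 % 2 = 1), ha]
    omega
  · rw [count_mergeSplit, if_neg hodd, if_neg htwo, count_mergeSplit, if_neg hodd, if_neg htwo]

lemma pos_of_mem_mergeSplit {s : Multiset ℕ} (hs : ∀ i ∈ s, 0 < i) {i : ℕ}
    (hi : i ∈ mergeSplit s) : 0 < i := by
  rcases Nat.eq_zero_or_pos i with rfl | hpos
  · rw [← count_pos, count_mergeSplit] at hi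
    exact hs 0 (count_pos.1 (by simpa using hi))
  · exact hpos

lemma exists_unique_two_mod_four_mergeSplit_iff (s : Multiset ℕ) :
    (∃ j, j % 4 = 2 ∧ j ∈ mergeSplit s ∧ ∀ i ∈ mergeSplit s, i % 4 = 2 → i = j) ↔
      ∃ j, Odd j ∧ 2 ≤ s.count j ∧ ∀ i, Odd i → i ≠ j → s.count i ≤ 1 := by
  have hcount : ∀ i, i % 4 = 2 → (i ∈ mergeSplit s ↔ 2 ≤ s.count (i / 2)) := fun i hi => by
    rw [← count_pos, count_mergeSplit, if_neg (by omega), if_pos hi]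
    omega
  constructor
  · rintro ⟨j, hj, hjmem, huniq⟩
    refine ⟨j / 2, Nat.odd_iff.2 (by omega), (hcount j hj).1 hjmem, fun i hi hij => ?_⟩
    have hi := Nat.odd_iff.1 hi
    by_contra! h2
    have := huniq (2 * i) ((hcount _ (by omega)).2 (by rw [Nat.mul_div_cancel_left i two_pos]; omega)) (by omega)
    omega
  · rintro ⟨v, hv, hv2, hother⟩
    have hv := Nat.odd_iff.1 hv
    refine ⟨2 * v, by omega, (hcount _ (by omega)).2 (by rwa [Nat.mul_div_cancel_left v two_pos]), fun i hi hi4 => ?_⟩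
    by_contra hne
    have := hother (i / 2) (Nat.odd_iff.2 (by omega)) (by omega)
    have := (hcount i hi4).1 hi
    omega

def Nat.Partition.mergeSplit {n : ℕ} (p : n.Partition) : n.Partition where
  parts := _root_.mergeSplit p.parts
  parts_pos := pos_of_mem_mergeSplit fun _ => p.parts_pos
  parts_sum := (sum_mergeSplit _).trans p.parts_sum

lemma Nat.Partition.mergeSplit_involutive (n : ℕ) :
    Function.Involutive (Nat.Partition.mergeSplit (n := n)) := fun p =>
  Nat.Partition.ext (_root_.mergeSplit_involutive p.parts)

theorem dO_eq_fTwo_general (n : ℕ) : dO n = fTwo n :=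
  Nat.card_congr <| (Nat.Partition.mergeSplit_involutive n).toPerm.subtypeEquiv fun p =>
    (exists_unique_two_mod_four_mergeSplit_iff p.parts).symm

theorem dO_eq_fTwo (n : ℕ) (hn : 1 ≤ n) : dO n = fTwo n :=
  dO_eq_fTwo_general n
end

section
/- As formal power series, ∑_{n≥0} d_e(n) q^n = (q^4;q^4)_∞/(q;q)_∞ · ∑_{n≥1} q^{4n}/(1 − q^{4n}), where d_e(n) is the number of partitions of n in which exactly one even part value is repeated and odd parts are unrestricted. -/
/-!
If the repeated even part `2a` of a partition counted by `d_e(n)` occurs `c ≥ 2` times, removing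
`2⌊c/2⌋` of its copies leaves a partition whose even parts are distinct, and the removed parts
sum to a multiple `M` of `4a`. Hence `d_e` is the convolution of the number of partitions with
distinct even parts, whose generating function is `∏ (1 + q^{2k}) / ∏ (1 - q^{2k-1})`, with
`M ↦ #{a ≥ 1 : 4a ∣ M}`, the coefficients of `∑ q^{4n}/(1 - q^{4n})`. Multiplying the product by
`(q;q)_∞` pairs `1 + q^{2k}` with `1 - q^{2k}` and cancels the odd factors, leaving `(q^4;q^4)_∞`.
-/

open PowerSeries

/-- The infinite product `(q^k;q^k)_∞ = ∏_{j ≥ 1} (1 - q^{kj})` as a formal power series: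
its `n`-th coefficient agrees with that of any truncation past `n` (for `k ≥ 1`). -/
noncomputable def pochhammerProd (k : ℕ) : PowerSeries ℚ :=
  PowerSeries.mk fun n =>
    coeff n (∏ j ∈ Finset.Icc 1 n, (1 - (X : PowerSeries ℚ) ^ (k * j)))

/-- The series `∑_{n ≥ 1} q^{4n} / (1 - q^{4n})`: the `n`-th summand has order `4n ≥ n`,
so the `N`-th coefficient agrees with that of the partial sum. -/
noncomputable def lambertSum4 : PowerSeries ℚ :=
  PowerSeries.mk fun N =>
    coeff N (∑ n ∈ Finset.Icc 1 N,
      (X : PowerSeries ℚ) ^ (4 * n) * (1 - (X : PowerSeries ℚ) ^ (4 * n))⁻¹)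

open Finset
open PowerSeries.WithPiTopology

theorem PowerSeries.inv_one_sub_X_pow_eq_mk {K : Type*} [Field K] {m : ℕ} (hm : 0 < m) :
    (1 - X ^ m : K⟦X⟧)⁻¹ = mk fun n => if m ∣ n then 1 else 0 := by
  refine (PowerSeries.inv_eq_iff_mul_eq_one (by simp [hm.ne'])).mpr ?_
  ext n
  rw [mul_sub, mul_one, map_sub, mul_comm, coeff_X_pow_mul', coeff_mk, coeff_one]
  rcases Nat.eq_zero_or_pos n with rfl | hn
  · simp [hm.not_ge]
  by_cases hmn : m ≤ n
  · simp [hn.ne', hmn, Nat.dvd_sub_iff_left hmn dvd_rfl]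
  · simp [hn.ne', hmn, mt (Nat.le_of_dvd hn) hmn]

theorem coeff_lambertSum4 (M : ℕ) :
    coeff M lambertSum4 = #{a ∈ Icc 1 M | 4 * a ∣ M} := by
  rw [lambertSum4, coeff_mk, map_sum, card_filter, Nat.cast_sum]
  refine sum_congr rfl fun a ha => ?_
  have ha : 1 ≤ a ∧ a ≤ M := mem_Icc.mp ha
  rw [inv_one_sub_X_pow_eq_mk (by omega), coeff_X_pow_mul', coeff_mk]
  have key : (4 * a ≤ M ∧ 4 * a ∣ M - 4 * a) ↔ 4 * a ∣ M :=
    ⟨fun h => (Nat.dvd_sub_iff_left h.1 dvd_rfl).mp h.2,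
      fun h => ⟨Nat.le_of_dvd (by omega) h, Nat.dvd_sub h dvd_rfl⟩⟩
  simp only [← ite_and, key, Nat.cast_ite, Nat.cast_one, Nat.cast_zero]

theorem hasProd_pochhammerProd {k : ℕ} (hk : 0 < k) :
    HasProd (fun i => 1 - X ^ (k * (i + 1))) (pochhammerProd k) := by
  rw [HasProd, tendsto_iff_coeff_tendsto]
  refine fun n => tendsto_atTop_of_eventually_const (i₀ := range n) fun s hs => ?_
  have hIcc : ∏ j ∈ Icc 1 n, (1 - X ^ (k * j)) =
      ∏ i ∈ range n, (1 - (X : ℚ⟦X⟧) ^ (k * (i + 1))) := by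
    rw [range_eq_Ico, prod_Ico_add' (fun j => (1 : ℚ⟦X⟧) - X ^ (k * j)) 0 n 1]
    rfl
  rw [pochhammerProd, coeff_mk, hIcc, ← prod_sdiff hs, mul_comm,
    coeff_mul_prod_one_sub_of_lt_order]
  intro i hi
  have : n ≤ i := by simpa using (mem_sdiff.mp hi).2
  rw [order_X_pow]
  exact_mod_cast (show n < k * (i + 1) by nlinarith)

namespace Nat.Partition

def evenDistincts (n : ℕ) : Finset n.Partition :=
  {p | ∀ i ∈ p.parts, Even i → p.parts.count i ≤ 1}

theorem count_le_one_of_mem_evenDistincts {n i : ℕ} {p : n.Partition} (hp : p ∈ evenDistincts n)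
    (hi : Even i) : p.parts.count i ≤ 1 := by
  by_cases hmem : i ∈ p.parts
  · exact (mem_filter.mp hp).2 i hmem hi
  · simp [Multiset.count_eq_zero_of_notMem hmem]

theorem mem_evenDistincts_iff {n : ℕ} {p : n.Partition} :
    p ∈ evenDistincts n ↔ ∀ i, Even i → p.parts.count i ≤ 1 :=
  ⟨fun hp _ => count_le_one_of_mem_evenDistincts hp,
    fun h => mem_filter.mpr ⟨mem_univ _, fun i _ => h i⟩⟩

theorem hasProd_powerSeriesMk_card_evenDistincts (R : Type*) [CommSemiring R]
    [TopologicalSpace R] [T2Space R] [IsTopologicalSemiring R] :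
    HasProd
      (fun i => if Even (i + 1) then 1 + X ^ (i + 1) else ∑' j : ℕ, (X : R⟦X⟧) ^ ((i + 1) * j))
      (PowerSeries.mk fun n => (#(evenDistincts n) : R)) := by
  convert hasProd_genFun (fun i c => if Even i → c ≤ 1 then (1 : R) else 0) using 1
  · ext1 i
    split_ifs with hi
    · rw [tsum_eq_single 0 fun j hj => by simp [hi, hj]]
      simp [hi]
    · rw [tsum_eq_zero_add' ?_]
      · simp [hi]
      simp_rw [pow_mul, pow_add]
      apply Summable.mul_right
      exact summable_pow_of_constantCoeff_eq_zero (by simp)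
  · ext n
    simp only [coeff_genFun, evenDistincts, card_filter, Finsupp.prod]
    rw [coeff_mk, Nat.cast_sum]
    refine sum_congr rfl fun p _ => ?_
    rw [prod_boole]
    simp

end Nat.Partition

open Nat.Partition

theorem powerSeriesMk_card_evenDistincts_mul_pochhammerProd_one :
    PowerSeries.mk (fun n => (#(evenDistincts n) : ℚ)) * pochhammerProd 1 = pochhammerProd 4 := by
  have hfactor : ∀ i : ℕ,
      (if Even (i + 1) then 1 + X ^ (i + 1) else ∑' j : ℕ, (X : ℚ⟦X⟧) ^ ((i + 1) * j)) *
        (1 - X ^ (1 * (i + 1))) = if Even (i + 1) then 1 - X ^ (2 * (i + 1)) else 1 := by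
    intro i
    split_ifs
    · ring
    · simp_rw [one_mul, pow_mul]
      exact tsum_pow_mul_one_sub_of_constantCoeff_eq_zero (by simp)
  have hprod := (hasProd_powerSeriesMk_card_evenDistincts ℚ).mul (hasProd_pochhammerProd one_pos)
  simp_rw [hfactor] at hprod
  -- only the odd indices `i = 2t+1`, i.e. the even exponents `i + 1`, contribute a factor `≠ 1`
  have h4 : HasProd (fun t : ℕ => if Even (2 * t + 1 + 1) then 1 - X ^ (2 * (2 * t + 1 + 1)) else 1)
      (pochhammerProd 4) := by
    convert hasProd_pochhammerProd (k := 4) (by norm_num) using 2 with t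
    rw [if_pos (by simp [parity_simps])]
    ring_nf
  refine hprod.unique ((Function.Injective.hasProd_iff (g := fun t => 2 * t + 1)
    (fun a b h => by dsimp only at h; omega) ?_).mp h4)
  rintro i hi
  rw [if_neg]
  rintro ⟨t, ht⟩
  exact hi ⟨t - 1, by dsimp only; omega⟩

/-- `⟨(r, M), (a, μ)⟩` with `r + M = N`, `4a ∣ M` and `μ ⊢ r` with distinct even parts stands for
the partition of `N` obtained by adding `M / 2a` parts equal to `2a` to `μ`. -/
def repeatedEvenData (N : ℕ) : Finset ((p : ℕ × ℕ) × (ℕ × p.1.Partition)) :=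
  (antidiagonal N).sigma fun p => {a ∈ Icc 1 p.2 | 4 * a ∣ p.2} ×ˢ evenDistincts p.1

theorem card_repeatedEvenData (N : ℕ) : #(repeatedEvenData N) =
    ∑ p ∈ antidiagonal N, #{a ∈ Icc 1 p.2 | 4 * a ∣ p.2} * #(evenDistincts p.1) := by
  simp [repeatedEvenData, card_sigma, card_product]

section RepeatedEvenData

variable {N : ℕ} {b : (p : ℕ × ℕ) × (ℕ × p.1.Partition)}

theorem mem_repeatedEvenData :
    b ∈ repeatedEvenData N ↔ b.1.1 + b.1.2 = N ∧ (1 ≤ b.2.1 ∧ b.2.1 ≤ b.1.2) ∧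
      4 * b.2.1 ∣ b.1.2 ∧ b.2.2 ∈ evenDistincts b.1.1 := by
  simp [repeatedEvenData, and_assoc]

theorem div_mul_cancel_of_mem_repeatedEvenData (hb : b ∈ repeatedEvenData N) :
    b.1.2 / (2 * b.2.1) * (2 * b.2.1) = b.1.2 :=
  Nat.div_mul_cancel <| dvd_trans (Dvd.intro 2 (by ring)) (mem_repeatedEvenData.mp hb).2.2.1

def addEvenPairs (b : (p : ℕ × ℕ) × (ℕ × p.1.Partition)) (hb : b ∈ repeatedEvenData N) :
    N.Partition where
  parts := b.2.2.parts + Multiset.replicate (b.1.2 / (2 * b.2.1)) (2 * b.2.1)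
  parts_pos {i} hi := by
    obtain ⟨-, ⟨ha, -⟩, -⟩ := mem_repeatedEvenData.mp hb
    rcases Multiset.mem_add.mp hi with hi | hi
    · exact b.2.2.parts_pos hi
    · rw [Multiset.eq_of_mem_replicate hi]
      omega
  parts_sum := by
    rw [Multiset.sum_add, Multiset.sum_replicate, b.2.2.parts_sum, smul_eq_mul,
      div_mul_cancel_of_mem_repeatedEvenData hb, (mem_repeatedEvenData.mp hb).1]

theorem count_addEvenPairs (hb : b ∈ repeatedEvenData N) (e : ℕ) :
    (addEvenPairs b hb).parts.count e =
      b.2.2.parts.count e + if e = 2 * b.2.1 then b.1.2 / (2 * b.2.1) else 0 := by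
  simp [addEvenPairs, Multiset.count_replicate, eq_comm]

theorem exists_div_eq_two_mul_of_mem_repeatedEvenData (hb : b ∈ repeatedEvenData N) :
    ∃ k, 0 < k ∧ b.1.2 / (2 * b.2.1) = 2 * k := by
  obtain ⟨-, ⟨ha, hM⟩, ⟨k, hk⟩, -⟩ := mem_repeatedEvenData.mp hb
  refine ⟨k, Nat.pos_of_ne_zero fun hk0 => by simp [hk0] at hk; omega, ?_⟩
  rw [hk, show 4 * b.2.1 * k = 2 * b.2.1 * (2 * k) by ring, Nat.mul_div_cancel_left _ (by omega)]

theorem addEvenPairs_spec (hb : b ∈ repeatedEvenData N) :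
    ∃ j, Even j ∧ 2 ≤ (addEvenPairs b hb).parts.count j ∧
      ∀ i, Even i → i ≠ j → (addEvenPairs b hb).parts.count i ≤ 1 := by
  obtain ⟨k, hk, hdiv⟩ := exists_div_eq_two_mul_of_mem_repeatedEvenData hb
  have hμ := (mem_repeatedEvenData.mp hb).2.2.2
  refine ⟨2 * b.2.1, even_two_mul _, ?_, fun i hi hne => ?_⟩
  · rw [count_addEvenPairs, if_pos rfl]
    omega
  · rw [count_addEvenPairs, if_neg hne, add_zero]
    exact count_le_one_of_mem_evenDistincts hμ hi

theorem addEvenPairs_injective (b₁ : (p : ℕ × ℕ) × (ℕ × p.1.Partition))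
    (hb₁ : b₁ ∈ repeatedEvenData N) (b₂ : (p : ℕ × ℕ) × (ℕ × p.1.Partition))
    (hb₂ : b₂ ∈ repeatedEvenData N) (heq : addEvenPairs b₁ hb₁ = addEvenPairs b₂ hb₂) :
    b₁ = b₂ := by
  have hcount (e : ℕ) := congrArg (·.parts.count e) heq
  simp only [count_addEvenPairs] at hcount
  obtain ⟨k₁, hk₁, hdiv₁⟩ := exists_div_eq_two_mul_of_mem_repeatedEvenData hb₁
  obtain ⟨k₂, hk₂, hdiv₂⟩ := exists_div_eq_two_mul_of_mem_repeatedEvenData hb₂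
  obtain ⟨⟨r₁, M₁⟩, a₁, μ₁⟩ := b₁
  obtain ⟨⟨r₂, M₂⟩, a₂, μ₂⟩ := b₂
  obtain ⟨hN₁, -, -, hμ₁⟩ := mem_repeatedEvenData.mp hb₁
  obtain ⟨hN₂, -, -, hμ₂⟩ := mem_repeatedEvenData.mp hb₂
  dsimp only at *
  have hle₁ (i) := count_le_one_of_mem_evenDistincts hμ₁ (even_two_mul i)
  have hle₂ (i) := count_le_one_of_mem_evenDistincts hμ₂ (even_two_mul i)
  -- `2a` is the only even part value occurring at least twice, so it determines `a`
  obtain rfl : a₁ = a₂ := by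
    by_contra hne
    have := hcount (2 * a₂)
    rw [if_neg (by omega), if_pos rfl] at this
    have := hle₁ a₂
    omega
  have h2a := hcount (2 * a₁)
  simp only [if_pos, hdiv₁, hdiv₂] at h2a
  obtain rfl : k₁ = k₂ := by
    have := hle₁ a₁
    have := hle₂ a₁
    omega
  obtain rfl : M₁ = M₂ := by
    have h₁ := div_mul_cancel_of_mem_repeatedEvenData hb₁
    have h₂ := div_mul_cancel_of_mem_repeatedEvenData hb₂
    dsimp only at h₁ h₂
    rw [← h₁, ← h₂, hdiv₁, hdiv₂]
  obtain rfl : r₁ = r₂ := by omega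
  obtain rfl : μ₁ = μ₂ := Nat.Partition.ext <| Multiset.ext.mpr fun e => by
    simpa using hcount e
  rfl

theorem exists_addEvenPairs_eq (lam : N.Partition) (j : ℕ) (hj : Even j)
    (hj2 : 2 ≤ lam.parts.count j) (hother : ∀ i, Even i → i ≠ j → lam.parts.count i ≤ 1) :
    ∃ b hb, addEvenPairs (N := N) b hb = lam := by
  obtain ⟨a, rfl⟩ := even_iff_two_dvd.mp hj
  have ha : 0 < a := Nat.pos_of_ne_zero fun ha0 => by
    simp only [ha0, mul_zero] at hj2
    exact (lam.parts_pos (Multiset.count_pos.mp (by omega))).false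
  -- remove the largest even number `2k` of copies of `2a`
  set k := lam.parts.count (2 * a) / 2
  have hrep : Multiset.replicate (2 * k) (2 * a) ≤ lam.parts :=
    Multiset.le_count_iff_replicate_le.mp (by omega)
  have hsum : (lam.parts - Multiset.replicate (2 * k) (2 * a)).sum + 2 * k * (2 * a) = N := by
    have := congrArg Multiset.sum (tsub_add_cancel_of_le hrep)
    rwa [Multiset.sum_add, lam.parts_sum, Multiset.sum_replicate, smul_eq_mul] at this
  let μ : (N - 2 * k * (2 * a)).Partition :=
    { parts := lam.parts - Multiset.replicate (2 * k) (2 * a)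
      parts_pos := fun hi => lam.parts_pos (Multiset.mem_of_le tsub_le_self hi)
      parts_sum := by omega }
  have hb : (⟨(N - 2 * k * (2 * a), 2 * k * (2 * a)), (a, μ)⟩ :
      (p : ℕ × ℕ) × (ℕ × p.1.Partition)) ∈ repeatedEvenData N := by
    refine mem_repeatedEvenData.mpr ⟨?_, ⟨ha, ?_⟩, ⟨k, by ring⟩, ?_⟩ <;> dsimp only
    · omega
    · have hk : 1 ≤ k := by omega
      nlinarith
    · refine mem_evenDistincts_iff.mpr fun i hi => ?_
      rw [Multiset.count_sub, Multiset.count_replicate]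
      split_ifs with hia
      · subst hia
        omega
      · have := hother i hi (Ne.symm hia)
        omega
  refine ⟨_, hb, Nat.Partition.ext ?_⟩
  simp only [addEvenPairs, Nat.mul_div_cancel _ (show 0 < 2 * a by omega)]
  exact tsub_add_cancel_of_le hrep

end RepeatedEvenData

theorem dE_eq_card_repeatedEvenData (N : ℕ) : dE N = #(repeatedEvenData N) := by
  classical
  rw [dE, Nat.card_eq_fintype_card, Fintype.card_subtype]
  refine (card_bij addEvenPairs (fun b hb => mem_filter.mpr ⟨mem_univ _, addEvenPairs_spec hb⟩)
    addEvenPairs_injective fun lam hlam => ?_).symm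
  obtain ⟨j, hj, hj2, hother⟩ := (mem_filter.mp hlam).2
  exact exists_addEvenPairs_eq lam j hj hj2 hother

theorem powerSeriesMk_dE_eq_mul_lambertSum4 :
    PowerSeries.mk (fun n => (dE n : ℚ)) =
      PowerSeries.mk (fun n => (#(evenDistincts n) : ℚ)) * lambertSum4 := by
  ext N
  rw [coeff_mk, coeff_mul, dE_eq_card_repeatedEvenData, card_repeatedEvenData]
  push_cast
  refine sum_congr rfl fun p _ => ?_
  rw [coeff_mk, coeff_lambertSum4, mul_comm]

theorem dE_genFun :
    PowerSeries.mk (fun n => (dE n : ℚ)) =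
      pochhammerProd 4 * (pochhammerProd 1)⁻¹ * lambertSum4 := by
  have hunit : constantCoeff (pochhammerProd 1) ≠ 0 := by simp [pochhammerProd]
  rw [← powerSeriesMk_card_evenDistincts_mul_pochhammerProd_one, mul_assoc _ (pochhammerProd 1),
    PowerSeries.mul_inv_cancel _ hunit, mul_one, powerSeriesMk_dE_eq_mul_lambertSum4]
end

section
/- Let k, p ≥ 2 and 0 ≤ r < p be integers. For all n ≥ 1, the number of partitions of n in which exactly one part value congruent to r mod p appears at least k times (all other parts congruent to r mod p appear at most k−1 times, and parts not congruent to r mod p are unrestricted) equals the number of partitions of n in which the set of parts congruent to kr modulo pk is a singleton. -/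
/-- `d_p(n,k,r)`: partitions of `n` in which exactly one part value congruent to `r` mod `p`
appears at least `k` times, all other part values congruent to `r` mod `p` appear at most
`k - 1` times, and parts not congruent to `r` mod `p` are unrestricted. -/
noncomputable def dP (p n k r : ℕ) : ℕ :=
  Nat.card {lam : n.Partition //
    ∃ j, j % p = r ∧ k ≤ lam.parts.count j ∧
      ∀ i, i % p = r → i ≠ j → lam.parts.count i ≤ k - 1}

/-- `f_p(n,k,r)`: partitions of `n` in which the set of parts congruent to `kr` modulo `pk`
is a singleton. -/
noncomputable def fP (p n k r : ℕ) : ℕ :=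
  Nat.card {lam : n.Partition //
    ∃ j, j % (p * k) = (k * r) % (p * k) ∧ j ∈ lam.parts ∧
      ∀ i ∈ lam.parts, i % (p * k) = (k * r) % (p * k) → i = j}

/-!
Weight a partition by `y ^ N`, where `N` counts the distinct parts in `S` of multiplicity at
least `k`. The generating function of these weights is an Euler product, and multiplying it by
`∏ (1 - X ^ i)` leaves `∏_{m ∈ S} (1 + (y - 1) X ^ (k m))`. Reindexing by `m ↦ k m`, this is the
same product for the set `k S` and multiplicity `1`, so the weighted counts agree for every `y`.
With `y` a formal variable, the coefficient of `y ^ 1` gives the theorem, because the integers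
`≡ k r (mod p k)` are exactly the multiples `k x` with `x ≡ r (mod p)`.
-/

open Finset PowerSeries PowerSeries.WithPiTopology

namespace Nat.Partition

open scoped Classical in
noncomputable def partsWithCountGe {n : ℕ} (μ : n.Partition) (S : Set ℕ) (k : ℕ) : Finset ℕ :=
  {i ∈ μ.parts.toFinset | i ∈ S ∧ k ≤ μ.parts.count i}

open scoped Classical in
noncomputable def countGeWeight {R : Type*} [CommRing R] (S : Set ℕ) (k : ℕ) (y : R) (i c : ℕ) :
    R :=
  if i ∈ S ∧ k ≤ c then y else 1

open scoped Classical in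
theorem prod_countGeWeight {R : Type*} [CommRing R] {n : ℕ} (μ : n.Partition) (S : Set ℕ)
    (k : ℕ) (y : R) :
    μ.parts.toFinsupp.prod (countGeWeight S k y) = y ^ #(μ.partsWithCountGe S k) := by
  rw [Finsupp.prod, Multiset.toFinsupp_support, partsWithCountGe, ← prod_const, prod_filter]
  simp only [countGeWeight]
  congr! 1

section Topological

variable {R : Type*} [CommRing R] [TopologicalSpace R] [IsTopologicalRing R] [T2Space R]

theorem one_add_tsum_ite_smul_pow_mul_one_sub {Z : R⟦X⟧} (hZ : constantCoeff Z = 0) {k : ℕ}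
    (hk : 0 < k) (y : R) :
    (1 + ∑' j, (if k ≤ j + 1 then y else 1) • Z ^ (j + 1)) * (1 - Z) = 1 + (y - 1) • Z ^ k := by
  set G := ∑' c, Z ^ c
  have hG : HasSum (Z ^ ·) G := (summable_pow_of_constantCoeff_eq_zero hZ).hasSum
  have htail : HasSum (fun c ↦ if k ≤ c then (y - 1) • Z ^ c else 0) ((y - 1) • Z ^ k * G) := by
    refine (hasSum_nat_add_iff' k).mp ?_
    rw [sum_eq_zero fun i hi ↦ if_neg (by simpa using hi), sub_zero]
    simpa [pow_add, mul_comm, smul_mul_assoc] using hG.mul_left ((y - 1) • Z ^ k)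
  have hall : HasSum (fun c ↦ (if k ≤ c then y else 1) • Z ^ c) (G * (1 + (y - 1) • Z ^ k)) := by
    convert hG.add htail using 1
    · funext c; split_ifs <;> simp [sub_smul]
    · ring
  rw [((hasSum_nat_add_iff' 1).mpr hall).tsum_eq]
  simp only [range_one, sum_singleton, Nat.not_le.mpr hk, if_false, pow_zero, one_smul,
    add_sub_cancel]
  rw [mul_right_comm, tsum_pow_mul_one_sub_of_constantCoeff_eq_zero hZ, one_mul]

open scoped Classical in
theorem hasProd_genFun_countGeWeight_mul (S : Set ℕ) {k : ℕ} (hk : 0 < k) (y : R) :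
    HasProd (fun i ↦ if i + 1 ∈ S then 1 + (y - 1) • X ^ ((i + 1) * k) else 1)
      (genFun (countGeWeight S k y) * ∏' i, (1 - X ^ (i + 1))) := by
  refine ((hasProd_genFun _).mul (multipliable_one_sub_X_pow R).hasProd).congr_fun fun i ↦ ?_
  have hZ : constantCoeff (X ^ (i + 1) : R⟦X⟧) = 0 := by simp
  simp_rw [countGeWeight, pow_mul]
  split_ifs with hi
  · simp only [hi, true_and]
    rw [one_add_tsum_ite_smul_pow_mul_one_sub hZ hk]
  · simp only [hi, false_and, if_false]
    simpa using (one_add_tsum_ite_smul_pow_mul_one_sub hZ hk (1 : R)).symm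

end Topological

open scoped Classical in
theorem hasProd_ite_image_mul_iff {M : Type*} [CommMonoid M] [TopologicalSpace M] (S : Set ℕ)
    {k : ℕ} (hk : 0 < k) (f : ℕ → M) {a : M} :
    HasProd (fun i ↦ if i + 1 ∈ S then f ((i + 1) * k) else 1) a ↔
      HasProd (fun i ↦ if i + 1 ∈ (k * ·) '' S then f (i + 1) else 1) a := by
  have hsucc (i : ℕ) : (i + 1) * k - 1 + 1 = (i + 1) * k :=
    Nat.sub_add_cancel (Nat.mul_pos i.succ_pos hk)
  have hg : Function.Injective fun i ↦ (i + 1) * k - 1 := by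
    intro i j h
    have hij : (i + 1) * k = (j + 1) * k := by
      rw [← hsucc i, ← hsucc j]
      exact congrArg (· + 1) h
    have := Nat.eq_of_mul_eq_mul_right hk hij
    omega
  refine Iff.trans ?_ (hg.hasProd_iff fun i hi ↦ if_neg ?_)
  · congr! 2 with i
    rw [Function.comp_apply, hsucc, mul_comm, (mul_right_injective₀ hk.ne').mem_set_image]
  · rintro ⟨m, -, hmi⟩
    obtain ⟨m, rfl⟩ := Nat.exists_eq_succ_of_ne_zero (by rintro rfl; simp at hmi : m ≠ 0)
    exact hi ⟨m, by simp only [mul_comm, hmi, Nat.add_sub_cancel]⟩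

theorem isUnit_tprod_one_sub_X_pow {R : Type*} [CommRing R] [TopologicalSpace R] [T2Space R] :
    IsUnit (∏' i, (1 - X ^ (i + 1)) : R⟦X⟧) := by
  rw [isUnit_iff_constantCoeff,
    (multipliable_one_sub_X_pow R).map_tprod _ (continuous_constantCoeff R)]
  simp

theorem genFun_countGeWeight_eq {R : Type*} [CommRing R] (S : Set ℕ) {k : ℕ} (hk : 0 < k)
    (y : R) : genFun (countGeWeight S k y) = genFun (countGeWeight ((k * ·) '' S) 1 y) := by
  let _ : TopologicalSpace R := ⊥
  have _ : DiscreteTopology R := ⟨rfl⟩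
  refine isUnit_tprod_one_sub_X_pow.mul_right_cancel (HasProd.unique ?_
    (hasProd_genFun_countGeWeight_mul _ one_pos y))
  simpa using (hasProd_ite_image_mul_iff S hk (fun m ↦ 1 + (y - 1) • X ^ m)).mp
    (hasProd_genFun_countGeWeight_mul S hk y)

theorem sum_pow_card_partsWithCountGe_eq {R : Type*} [CommRing R] (S : Set ℕ) {k : ℕ}
    (hk : 0 < k) (y : R) (n : ℕ) :
    ∑ μ : n.Partition, y ^ #(μ.partsWithCountGe S k) =
      ∑ μ : n.Partition, y ^ #(μ.partsWithCountGe ((k * ·) '' S) 1) := by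
  simpa [prod_countGeWeight] using congrArg (coeff n) (genFun_countGeWeight_eq S hk y)

theorem card_card_partsWithCountGe_eq (S : Set ℕ) {k : ℕ} (hk : 0 < k) (n t : ℕ) :
    Nat.card {μ : n.Partition // #(μ.partsWithCountGe S k) = t} =
      Nat.card {μ : n.Partition // #(μ.partsWithCountGe ((k * ·) '' S) 1) = t} := by
  have := congrArg (Polynomial.coeff · t)
    (sum_pow_card_partsWithCountGe_eq S hk (Polynomial.X : Polynomial ℤ) n)
  simp only [Polynomial.finsetSum_coeff, Polynomial.coeff_X_pow, Finset.sum_boole] at this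
  simpa [Nat.card_eq_fintype_card, Fintype.card_subtype, eq_comm] using this

open scoped Classical in
theorem mem_partsWithCountGe {n : ℕ} {μ : n.Partition} {S : Set ℕ} {k : ℕ} (hk : 0 < k)
    {i : ℕ} :
    i ∈ μ.partsWithCountGe S k ↔ i ∈ S ∧ k ≤ μ.parts.count i := by
  rw [partsWithCountGe, mem_filter, Multiset.mem_toFinset, and_iff_right_iff_imp]
  exact fun h ↦ Multiset.count_pos.mp (hk.trans_le h.2)

theorem card_partsWithCountGe_eq_one_iff {n : ℕ} (μ : n.Partition) (S : Set ℕ) {k : ℕ}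
    (hk : 0 < k) : #(μ.partsWithCountGe S k) = 1 ↔
      ∃ j ∈ S, k ≤ μ.parts.count j ∧ ∀ i ∈ S, i ≠ j → μ.parts.count i < k := by
  simp only [card_eq_one, eq_singleton_iff_unique_mem, mem_partsWithCountGe hk]
  refine exists_congr fun j ↦ ?_
  grind

end Nat.Partition

theorem Nat.mem_image_mul_setOf_mod_iff {k p r : ℕ} (hk : 0 < k) (hr : r < p) {m : ℕ} :
    m ∈ (k * ·) '' {x | x % p = r} ↔ m % (p * k) = k * r % (p * k) := by
  rw [mul_comm p k, Nat.mul_mod_mul_left, Nat.mod_eq_of_lt hr]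
  constructor
  · rintro ⟨x, hx, rfl⟩
    rw [Nat.mul_mod_mul_left, hx]
  · intro h
    obtain ⟨x, rfl⟩ : k ∣ m := (Nat.dvd_mod_iff (dvd_mul_right k p)).mp (h ▸ dvd_mul_right k r)
    rw [Nat.mul_mod_mul_left] at h
    exact ⟨x, Nat.eq_of_mul_eq_mul_left hk h, rfl⟩

theorem dP_eq_fP_general (k p : ℕ) (hk : 2 ≤ k) (r : ℕ) (hr : r < p) (n : ℕ) :
    dP p n k r = fP p n k r := by
  have hk0 : 0 < k := by omega
  calc dP p n k r
      = Nat.card {μ : n.Partition // #(μ.partsWithCountGe {x | x % p = r} k) = 1} := by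
        refine Nat.card_congr (Equiv.subtypeEquivRight fun μ ↦ ?_)
        rw [μ.card_partsWithCountGe_eq_one_iff _ hk0]
        simp [Nat.lt_iff_le_pred hk0]
    _ = Nat.card {μ : n.Partition //
          #(μ.partsWithCountGe ((k * ·) '' {x | x % p = r}) 1) = 1} :=
        Nat.Partition.card_card_partsWithCountGe_eq _ hk0 n 1
    _ = fP p n k r := by
        refine Nat.card_congr (Equiv.subtypeEquivRight fun μ ↦ ?_)
        rw [μ.card_partsWithCountGe_eq_one_iff _ one_pos]
        simp only [Nat.mem_image_mul_setOf_mod_iff hk0 hr, Multiset.one_le_count_iff_mem,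
          Nat.lt_one_iff, Multiset.count_eq_zero]
        grind

theorem dP_eq_fP (k p : ℕ) (hk : 2 ≤ k) (hp : 2 ≤ p) (r : ℕ) (hr : r < p) (n : ℕ)
    (hn : 1 ≤ n) : dP p n k r = fP p n k r :=
  dP_eq_fP_general k p hk r hr n
end

section
/- Let p, k ≥ 2. For all n ≥ 0, the number of partitions of n in which exactly one part value is repeated at least pk times (all other values appear at most pk−1 times) equals the number of partitions of n in which exactly one part value divisible by p appears at least k times (all other values divisible by p appear at most k−1 times, and values not divisible by p are unrestricted). -/
/-- `d_m(n)`: partitions of `n` in which exactly one part value is repeated at least `m`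
times, all other part values appearing at most `m - 1` times. -/
noncomputable def dRep (m n : ℕ) : ℕ :=
  Nat.card {lam : n.Partition //
    ∃ j, m ≤ lam.parts.count j ∧ ∀ i, i ≠ j → lam.parts.count i ≤ m - 1}

/-- `d_p(n,k,0)`: partitions of `n` in which exactly one part value divisible by `p` appears
at least `k` times, all other part values divisible by `p` appear at most `k - 1` times,
and part values not divisible by `p` are unrestricted. -/
noncomputable def dPZero (p n k : ℕ) : ℕ :=
  Nat.card {lam : n.Partition //
    ∃ j, p ∣ j ∧ k ≤ lam.parts.count j ∧
      ∀ i, p ∣ i → i ≠ j → lam.parts.count i ≤ k - 1}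

/-!
Mark by a variable `y` every part `i ∈ S` that is repeated at least `m` times. Since
`∑_c y^[m ≤ c] X^(ic) = (1 + (y - 1) X^(im)) / (1 - X^i)`, the generating function of partitions
weighted by `y ^ (number of marked parts)` is `∏_i (1 + (y - 1) X^(i p k)) / (1 - X^i)` for
`S = ℕ, m = p k` and `∏_{p ∤ i} 1 / (1 - X^i) · ∏_{p ∣ i} (1 + (y - 1) X^(i k)) / (1 - X^i)` for
`S = pℕ, m = k`; these are the same product. Comparing coefficients of `y ^ 1` gives the theorem.
-/

open PowerSeries PowerSeries.WithPiTopology Finset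

theorem tprod_ite_dvd_add_one {M : Type*} [CommMonoid M] [TopologicalSpace M] {p : ℕ}
    (hp : p ≠ 0) (f : ℕ → M) :
    ∏' i, (if p ∣ i + 1 then f (i + 1) else 1) = ∏' i, f (p * (i + 1)) := by
  have hg : ∀ i, p * (i + 1) - 1 + 1 = p * (i + 1) := fun i =>
    Nat.sub_add_cancel (Nat.one_le_iff_ne_zero.mpr (Nat.mul_ne_zero hp i.succ_ne_zero))
  refine (Function.Injective.tprod_eq (g := fun i => p * (i + 1) - 1) ?_ ?_).symm.trans ?_
  · intro i j hij
    have h := congrArg (· + 1) hij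
    simp only [hg] at h
    simpa [hp] using h
  · intro i hi
    have hdvd : p ∣ i + 1 := by
      by_contra h
      exact hi (by simp [h])
    obtain ⟨_ | l, hl⟩ := hdvd
    · simp at hl
    · exact ⟨l, by simp only; omega⟩
  · simp [hg]

namespace Nat.Partition

theorem one_add_tsum_mul_one_sub_X_pow {R : Type*} [CommRing R] [TopologicalSpace R]
    [IsTopologicalRing R] [T2Space R] {a : ℕ} (ha : a ≠ 0) {c : ℕ → R} (hc : c 0 = 1) :
    (1 + ∑' j, c (j + 1) • (X : R⟦X⟧) ^ (a * (j + 1))) * (1 - X ^ a) =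
      1 + ∑' j, (c (j + 1) - c j) • X ^ (a * (j + 1)) := by
  have hs := summable_genFun_term' (fun _ => c) ha
  have hshift : ∀ j, c (j + 1) • (X : R⟦X⟧) ^ (a * (j + 1 + 1)) =
      X ^ a * (c (j + 1) • X ^ (a * (j + 1))) := fun j => by
    rw [mul_smul_comm, ← pow_add]
    ring_nf
  have hs' : Summable fun j ↦ c j • (X : R⟦X⟧) ^ (a * (j + 1)) :=
    (summable_nat_add_iff 1).mp (by simpa only [hshift] using hs.mul_left (X ^ a))
  have hshifted_sum : ∑' j, c j • (X : R⟦X⟧) ^ (a * (j + 1)) =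
      X ^ a * (1 + ∑' j, c (j + 1) • X ^ (a * (j + 1))) := by
    rw [hs'.tsum_eq_zero_add]
    simp only [hshift, hs.tsum_mul_left, hc, one_smul, zero_add, mul_one]
    ring
  simp only [sub_smul]
  rw [hs.tsum_sub hs', hshifted_sum]
  ring

variable {R : Type*} [CommRing R]

def heavyChar (y : R) (S : ℕ → Prop) [DecidablePred S] (m i c : ℕ) : R :=
  if S i ∧ m ≤ c then y else 1

def heavyCount (S : ℕ → Prop) [DecidablePred S] (m : ℕ) {n : ℕ} (μ : n.Partition) : ℕ :=
  #{i ∈ μ.parts.toFinset | S i ∧ m ≤ μ.parts.count i}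

variable (y : R) (S : ℕ → Prop) [DecidablePred S] {m : ℕ}

theorem coeff_genFun_heavyChar (n : ℕ) :
    coeff n (genFun (heavyChar y S m)) = ∑ μ : n.Partition, y ^ heavyCount S m μ := by
  refine (coeff_genFun _ n).trans (sum_congr rfl fun μ _ => ?_)
  simp only [Finsupp.prod, Multiset.toFinsupp_support, heavyChar]
  rw [prod_ite, prod_const, prod_const_one, mul_one, heavyCount]
  rfl

theorem heavyCount_eq_one_iff (hm : m ≠ 0) {n : ℕ} (μ : n.Partition) :
    heavyCount S m μ = 1 ↔
      ∃ j, S j ∧ m ≤ μ.parts.count j ∧ ∀ i, S i → i ≠ j → μ.parts.count i < m := by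
  simp only [heavyCount, card_eq_one, eq_singleton_iff_unique_mem, mem_filter,
    Multiset.mem_toFinset, ← Multiset.count_pos]
  refine exists_congr fun j => ⟨fun ⟨⟨_, hS, hj⟩, h⟩ => ⟨hS, hj, fun i hi hij => ?_⟩,
    fun ⟨hS, hj, h⟩ => ⟨⟨by omega, hS, hj⟩, fun i ⟨_, hi, hmi⟩ => ?_⟩⟩
  · by_contra! hmi
    exact hij (h i ⟨by omega, hi, hmi⟩)
  · by_contra hij
    exact absurd (h i hi hij) (not_lt.mpr hmi)

section Topological
variable [TopologicalSpace R] [IsTopologicalRing R] [T2Space R]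

theorem one_add_tsum_heavyChar_mul_one_sub_X_pow (hm : m ≠ 0) {a : ℕ} (ha : a ≠ 0) :
    (1 + ∑' j, heavyChar y S m a (j + 1) • (X : R⟦X⟧) ^ (a * (j + 1))) * (1 - X ^ a) =
      if S a then 1 + (y - 1) • X ^ (a * m) else 1 := by
  rw [one_add_tsum_mul_one_sub_X_pow ha (if_neg fun h => hm (Nat.le_zero.mp h.2))]
  split_ifs with hS
  · rw [tsum_eq_single (m - 1) fun j hj => ?_]
    · have : ¬ m ≤ m - 1 := by omega
      simp [heavyChar, hS, Nat.sub_add_cancel (Nat.pos_of_ne_zero hm), this]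
    · have : m ≤ j + 1 ↔ m ≤ j := by omega
      simp [heavyChar, hS, this]
  · simp [heavyChar, hS]

theorem genFun_heavyChar_mul_tprod_one_sub_X_pow (hm : m ≠ 0) :
    genFun (heavyChar y S m) * ∏' i, (1 - (X : R⟦X⟧) ^ (i + 1)) =
      ∏' i, if S (i + 1) then 1 + (y - 1) • X ^ ((i + 1) * m) else 1 := by
  rw [genFun_eq_tprod, ← (multipliable_genFun _).tprod_mul (multipliable_one_sub_X_pow R)]
  exact tprod_congr fun i => one_add_tsum_heavyChar_mul_one_sub_X_pow y S hm i.succ_ne_zero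

end Topological

theorem genFun_heavyChar_mul_eq_genFun_heavyChar_dvd [NoZeroDivisors R] {p k : ℕ}
    (hp : p ≠ 0) (hk : k ≠ 0) :
    genFun (heavyChar y (fun _ => True) (p * k)) = genFun (heavyChar y (p ∣ ·) k) := by
  nontriviality R
  -- `genFun` does not depend on a topology; the discrete one makes the products converge.
  let _ : TopologicalSpace R := ⊥
  have _ : DiscreteTopology R := ⟨rfl⟩
  apply mul_right_cancel₀ (tprod_one_sub_X_pow_ne_zero R)
  rw [genFun_heavyChar_mul_tprod_one_sub_X_pow y _ (Nat.mul_ne_zero hp hk),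
    genFun_heavyChar_mul_tprod_one_sub_X_pow y _ hk,
    tprod_ite_dvd_add_one hp (fun a => 1 + (y - 1) • (X : R⟦X⟧) ^ (a * k))]
  simp only [if_true, mul_comm p, mul_assoc]

theorem card_heavyCount_eq_of_genFun_eq {S' : ℕ → Prop} [DecidablePred S'] {m' : ℕ}
    (h : genFun (heavyChar (Polynomial.X : Polynomial ℤ) S m) =
      genFun (heavyChar Polynomial.X S' m')) (n r : ℕ) :
    #{μ : n.Partition | heavyCount S m μ = r} = #{μ : n.Partition | heavyCount S' m' μ = r} := by
  have h := congrArg (fun F => (coeff n F).coeff r) h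
  simp only [coeff_genFun_heavyChar, Polynomial.finsetSum_coeff, Polynomial.coeff_X_pow] at h
  simp only [eq_comm (a := r), sum_boole] at h
  exact_mod_cast h

end Nat.Partition

open Nat.Partition

theorem dRep_eq_card_heavyCount_eq_one {m : ℕ} (hm : m ≠ 0) (n : ℕ) :
    dRep m n = #{μ : n.Partition | heavyCount (fun _ => True) m μ = 1} := by
  classical
  rw [dRep, Nat.card_eq_fintype_card, Fintype.card_subtype]
  congr! 2 with μ
  rw [heavyCount_eq_one_iff _ hm]
  simp only [true_and, forall_const, Nat.le_sub_one_iff_lt (Nat.pos_of_ne_zero hm)]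

theorem dPZero_eq_card_heavyCount_eq_one (p : ℕ) {k : ℕ} (hk : k ≠ 0) (n : ℕ) :
    dPZero p n k = #{μ : n.Partition | heavyCount (p ∣ ·) k μ = 1} := by
  classical
  rw [dPZero, Nat.card_eq_fintype_card, Fintype.card_subtype]
  congr! 2 with μ
  rw [heavyCount_eq_one_iff _ hk]
  simp only [Nat.le_sub_one_iff_lt (Nat.pos_of_ne_zero hk)]

theorem dRep_eq_dPZero (p k : ℕ) (hp : 2 ≤ p) (hk : 2 ≤ k) (n : ℕ) :
    dRep (p * k) n = dPZero p n k := by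
  have hp0 : p ≠ 0 := by omega
  have hk0 : k ≠ 0 := by omega
  rw [dRep_eq_card_heavyCount_eq_one (Nat.mul_ne_zero hp0 hk0),
    dPZero_eq_card_heavyCount_eq_one p hk0]
  exact card_heavyCount_eq_of_genFun_eq _
    (genFun_heavyChar_mul_eq_genFun_heavyChar_dvd Polynomial.X hp0 hk0) n 1
end
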